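/- arXiv:2308.06168 — 10 statements merged into one kernel-verified Lean document; each statement's English description precedes it below -/
import Mathlib

section
/- Let (Ω, 𝒜, P) be a probability space, Y : Ω → ℝ an integrable random variable and X : Ω → ℝ a random variable, and let ψ : ℝ → ℝ be convex with ψ(0) = 0 such that ψ(2Y) and ψ(−2Y) are integrable. Then 0 ≤ ∫_{ℝ×ℝ} ψ(E[Y|X = x₁] − E[Y|X = x₂]) d(P^X ⊗ P^X)(x₁,x₂) ≤ ∫_{ℝ×ℝ} ψ(y₁ − y₂) d(P^Y ⊗ P^Y)(y₁,y₂). -/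
open MeasureTheory ProbabilityTheory Filter Set
open scoped ENNReal Topology

private lemma aux_half {ψ : ℝ → ℝ} (hψ : ConvexOn ℝ Set.univ ψ) (x y : ℝ) :
    ψ ((x + y) / 2) ≤ (ψ x + ψ y) / 2 := by
  have h := hψ.2 (Set.mem_univ x) (Set.mem_univ y)
      (by norm_num : (0:ℝ) ≤ 1/2) (by norm_num : (0:ℝ) ≤ 1/2) (by norm_num)
  simp only [smul_eq_mul] at h
  have e : (x + y) / 2 = 1/2 * x + 1/2 * y := by ring
  rw [e]
  linarith

private lemma aux_nonneg {ψ : ℝ → ℝ} (hψ : ConvexOn ℝ Set.univ ψ) (hψ0 : ψ 0 = 0) (t : ℝ) :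
    0 ≤ ψ t + ψ (-t) := by
  have h := aux_half hψ t (-t)
  have e : (t + -t) / 2 = (0 : ℝ) := by ring
  rw [e, hψ0] at h
  linarith

private lemma aux_key {ψ : ℝ → ℝ} (hψ : ConvexOn ℝ Set.univ ψ) (hψ0 : ψ 0 = 0) (a b : ℝ) :
    |ψ (a - b)| ≤ ((|ψ (2*a)| + |ψ (-2*a)|) + (|ψ (2*b)| + |ψ (-2*b)|)) / 2 := by
  have h1 : ψ (a - b) ≤ (ψ (2*a) + ψ (-2*b)) / 2 := by
    have h := aux_half hψ (2*a) (-2*b)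
    have e : (2*a + -2*b) / 2 = a - b := by ring
    rwa [e] at h
  have h2 : ψ (b - a) ≤ (ψ (2*b) + ψ (-2*a)) / 2 := by
    have h := aux_half hψ (2*b) (-2*a)
    have e : (2*b + -2*a) / 2 = b - a := by ring
    rwa [e] at h
  have h3 : 0 ≤ ψ (a - b) + ψ (b - a) := by
    have h := aux_nonneg hψ hψ0 (a - b)
    have e : -(a - b) = b - a := by ring
    rwa [e] at h
  have l1 := le_abs_self (ψ (2*a)); have l2 := le_abs_self (ψ (-2*a))
  have l3 := le_abs_self (ψ (2*b)); have l4 := le_abs_self (ψ (-2*b))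
  have n1 := abs_nonneg (ψ (2*a)); have n2 := abs_nonneg (ψ (-2*a))
  have n3 := abs_nonneg (ψ (2*b)); have n4 := abs_nonneg (ψ (-2*b))
  rw [abs_le]
  constructor <;> linarith

/-- transfer integrability along an equality of pushforward measures, composed direction -/
private lemma int_of_map {α β : Type*} [MeasurableSpace α] [MeasurableSpace β]
    {ρ : Measure α} {τ : Measure β} {φ : α → β} (hφ : Measurable φ) (h : ρ.map φ = τ)
    {f : β → ℝ} (hf : Integrable f τ) : Integrable (fun a => f (φ a)) ρ := by
  rw [← h] at hf
  exact (integrable_map_measure hf.aestronglyMeasurable hφ.aemeasurable).mp hf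

/-- transfer integrability along an equality of pushforward measures, reverse direction -/
private lemma int_map_of_comp {α β : Type*} [MeasurableSpace α] [MeasurableSpace β]
    {ρ : Measure α} {τ : Measure β} {φ : α → β} (hφ : Measurable φ) (h : ρ.map φ = τ)
    {f : β → ℝ} (hfm : AEStronglyMeasurable f τ) (hf : Integrable (fun a => f (φ a)) ρ) :
    Integrable f τ := by
  rw [← h] at hfm ⊢
  exact (integrable_map_measure hfm hφ.aemeasurable).mpr hf

/-- transfer integrals along an equality of pushforward measures -/
private lemma integral_of_map {α β : Type*} [MeasurableSpace α] [MeasurableSpace β]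
    {ρ : Measure α} {τ : Measure β} {φ : α → β} (hφ : Measurable φ) (h : ρ.map φ = τ)
    {f : β → ℝ} (hf : AEStronglyMeasurable f τ) : ∫ y, f y ∂τ = ∫ a, f (φ a) ∂ρ := by
  rw [← h] at hf
  conv_lhs => rw [← h]
  exact integral_map hφ.aemeasurable hf

/-- For ψ convex with ψ(0)=0 and ψ(2Y), ψ(-2Y) integrable, the
sensitivity functional of conditional expectations is nonnegative and bounded by
the corresponding integral for independent copies of Y. -/
theorem stmt0 {Ω : Type*} [MeasurableSpace Ω] (P : Measure Ω) [IsProbabilityMeasure P]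
    (X Y : Ω → ℝ) (hX : Measurable X) (hY : Measurable Y)
    (hYint : Integrable Y P)
    (κ : Kernel ℝ ℝ) [IsMarkovKernel κ]
    (hκ : ∀ A B : Set ℝ, MeasurableSet A → MeasurableSet B →
      P.map (fun ω => (X ω, Y ω)) (A ×ˢ B) = ∫⁻ x in A, κ x B ∂(P.map X))
    (ψ : ℝ → ℝ) (hψ : ConvexOn ℝ Set.univ ψ) (hψ0 : ψ 0 = 0)
    (hint1 : Integrable (fun ω => ψ (2 * Y ω)) P)
    (hint2 : Integrable (fun ω => ψ (-2 * Y ω)) P) :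
    0 ≤ ∫ x : ℝ × ℝ, ψ ((∫ y, y ∂(κ x.1)) - ∫ y, y ∂(κ x.2))
          ∂((P.map X).prod (P.map X)) ∧
    ∫ x : ℝ × ℝ, ψ ((∫ y, y ∂(κ x.1)) - ∫ y, y ∂(κ x.2))
          ∂((P.map X).prod (P.map X)) ≤
      ∫ y : ℝ × ℝ, ψ (y.1 - y.2) ∂((P.map Y).prod (P.map Y)) := by
  have hμp : IsProbabilityMeasure (P.map X) := Measure.isProbabilityMeasure_map hX.aemeasurable
  have hνp : IsProbabilityMeasure (P.map Y) := Measure.isProbabilityMeasure_map hY.aemeasurable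
  set μ := P.map X with hμdef
  set ν := P.map Y with hνdef
  set m : ℝ → ℝ := fun x => ∫ y, y ∂(κ x) with hmdef
  set F : ℝ × ℝ → ℝ := fun q => ψ (q.1 - q.2) with hFdef
  have hψc : Continuous ψ := continuousOn_univ.mp (hψ.continuousOn isOpen_univ)
  have hFcont : Continuous F := hψc.comp (continuous_fst.sub continuous_snd)
  -- the kernel disintegration identity for the marginal
  have hbind : ∀ B : Set ℝ, MeasurableSet B → ν B = ∫⁻ x, κ x B ∂μ := by
    intro B hB
    have h := hκ Set.univ B MeasurableSet.univ hB
    rw [setLIntegral_univ] at h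
    rw [Measure.map_apply (hX.prodMk hY) (MeasurableSet.univ.prod hB)] at h
    have hpre : (fun ω => (X ω, Y ω)) ⁻¹' (Set.univ ×ˢ B) = Y ⁻¹' B := by
      ext ω; simp
    rw [hpre] at h
    rw [hνdef, Measure.map_apply hY hB, h]
  -- ν is the second marginal of μ ⊗ₘ κ
  have hsnd' : (μ ⊗ₘ κ).map Prod.snd = ν := by
    ext B hB
    rw [Measure.map_apply measurable_snd hB, Measure.compProd_apply (measurable_snd hB),
      hbind B hB]
    refine lintegral_congr fun a => by congr 1
  -- the two-point kernel
  set ξ : Kernel (ℝ × ℝ) (ℝ × ℝ) :=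
    (κ.comap Prod.fst measurable_fst) ×ₖ (κ.comap Prod.snd measurable_snd) with hξdef
  have hξapp : ∀ p : ℝ × ℝ, ξ p = (κ p.1).prod (κ p.2) := by
    intro p
    rw [hξdef, Kernel.prod_apply, Kernel.comap_apply, Kernel.comap_apply]
  -- ν.prod ν is the second marginal of (μ.prod μ) ⊗ₘ ξ
  have hsnd2' : ((μ.prod μ) ⊗ₘ ξ).map Prod.snd = ν.prod ν := by
    refine (Measure.prod_eq fun s t hs ht => ?_).symm
    rw [Measure.map_apply measurable_snd (hs.prod ht),
      Measure.compProd_apply (measurable_snd (hs.prod ht))]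
    have hint : ∀ p : ℝ × ℝ, ξ p (Prod.mk p ⁻¹' (Prod.snd ⁻¹' (s ×ˢ t)))
        = κ p.1 s * κ p.2 t := by
      intro p
      have hpre : Prod.mk p ⁻¹' (Prod.snd ⁻¹' (s ×ˢ t)) = s ×ˢ t := by ext q; simp
      rw [hpre, hξapp p, Measure.prod_prod]
    rw [lintegral_congr hint,
      lintegral_prod_mul (κ.measurable_coe hs).aemeasurable (κ.measurable_coe ht).aemeasurable,
      ← hbind s hs, ← hbind t ht]
  -- integrability of the basic building blocks with respect to ν
  have hψ2c : Continuous fun y : ℝ => ψ (2 * y) :=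
    hψc.comp (continuous_const.mul continuous_id)
  have hψ3c : Continuous fun y : ℝ => ψ (-2 * y) :=
    hψc.comp (continuous_const.mul continuous_id)
  have h1ν : Integrable (fun y : ℝ => ψ (2 * y)) ν :=
    int_map_of_comp hY hνdef.symm hψ2c.aestronglyMeasurable hint1
  have h2ν : Integrable (fun y : ℝ => ψ (-2 * y)) ν :=
    int_map_of_comp hY hνdef.symm hψ3c.aestronglyMeasurable hint2
  have hidν : Integrable (fun y : ℝ => y) ν :=
    int_map_of_comp hY hνdef.symm aestronglyMeasurable_id hYint
  have hgν : Integrable (fun y : ℝ => |ψ (2 * y)| + |ψ (-2 * y)|) ν := h1ν.abs.add h2ν.abs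
  -- integrability of F with respect to ν.prod ν
  have hgfst : Integrable (fun q : ℝ × ℝ => |ψ (2 * q.1)| + |ψ (-2 * q.1)|) (ν.prod ν) :=
    int_of_map measurable_fst Measure.fst_prod hgν
  have hgsnd : Integrable (fun q : ℝ × ℝ => |ψ (2 * q.2)| + |ψ (-2 * q.2)|) (ν.prod ν) :=
    int_of_map measurable_snd Measure.snd_prod hgν
  have hFint : Integrable F (ν.prod ν) := by
    refine Integrable.mono ((hgfst.add hgsnd).div_const 2) hFcont.aestronglyMeasurable
      (Eventually.of_forall fun q => ?_)
    rw [Real.norm_eq_abs, Real.norm_eq_abs]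
    have h := aux_key hψ hψ0 q.1 q.2
    have h2 := le_abs_self (((|ψ (2*q.1)| + |ψ (-2*q.1)|) + (|ψ (2*q.2)| + |ψ (-2*q.2)|)) / 2)
    exact h.trans h2
  -- transfer to the compProd measure
  have hFc2 : Integrable (fun z : (ℝ × ℝ) × (ℝ × ℝ) => F z.2) ((μ.prod μ) ⊗ₘ ξ) :=
    int_of_map measurable_snd hsnd2' hFint
  have hcompF := (Measure.integrable_compProd_iff hFc2.aestronglyMeasurable).mp hFc2
  -- a.e. integrability facts on the fibers
  have hidc : Integrable (fun z : ℝ × ℝ => z.2) (μ ⊗ₘ κ) :=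
    int_of_map measurable_snd hsnd' hidν
  have hcompid := (Measure.integrable_compProd_iff hidc.aestronglyMeasurable).mp hidc
  have haeid : ∀ᵐ x ∂μ, Integrable (fun y : ℝ => y) (κ x) := hcompid.1
  have h2c : Integrable (fun z : ℝ × ℝ => ψ (2 * z.2)) (μ ⊗ₘ κ) :=
    int_of_map measurable_snd hsnd' h1ν
  have hcomp2 := (Measure.integrable_compProd_iff h2c.aestronglyMeasurable).mp h2c
  have h3c : Integrable (fun z : ℝ × ℝ => ψ (-2 * z.2)) (μ ⊗ₘ κ) :=
    int_of_map measurable_snd hsnd' h2ν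
  have hcomp3 := (Measure.integrable_compProd_iff h3c.aestronglyMeasurable).mp h3c
  have hae2 : ∀ᵐ x ∂μ, Integrable (fun y : ℝ => ψ (2 * y)) (κ x) := hcomp2.1
  have hae3 : ∀ᵐ x ∂μ, Integrable (fun y : ℝ => ψ (-2 * y)) (κ x) := hcomp3.1
  have hI2 : Integrable (fun x => ∫ y, ‖ψ (2 * y)‖ ∂(κ x)) μ := hcomp2.2
  have hI3 : Integrable (fun x => ∫ y, ‖ψ (-2 * y)‖ ∂(κ x)) μ := hcomp3.2
  -- measurability of m
  have hmm : StronglyMeasurable m :=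
    StronglyMeasurable.integral_kernel_prod_right (κ := κ) (f := fun _ y => y)
      measurable_snd.stronglyMeasurable
  -- integrability of the dominating function for ψ ∘ m
  have hGmint : Integrable (fun x => |ψ (2 * m x)| + |ψ (-2 * m x)|) μ := by
    have hGcont : Continuous (fun t : ℝ => |ψ (2 * t)| + |ψ (-2 * t)|) :=
      hψ2c.abs.add hψ3c.abs
    refine Integrable.mono ((hI2.add hI3).const_mul 2)
      (hGcont.comp_stronglyMeasurable hmm).aestronglyMeasurable ?_
    filter_upwards [haeid, hae2, hae3] with x h0 h2 h3
    set A := ∫ y, ‖ψ (2 * y)‖ ∂(κ x) with hA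
    set B := ∫ y, ‖ψ (-2 * y)‖ ∂(κ x) with hB
    have hApos : 0 ≤ A := integral_nonneg fun y => norm_nonneg _
    have hBpos : 0 ≤ B := integral_nonneg fun y => norm_nonneg _
    have hJ2 : ψ (2 * m x) ≤ ∫ y, ψ (2 * y) ∂(κ x) := by
      have e : (2 : ℝ) * m x = ∫ y, 2 * y ∂(κ x) := (integral_const_mul 2 _).symm
      rw [e]
      exact hψ.map_integral_le hψc.continuousOn isClosed_univ
        (Eventually.of_forall fun y => Set.mem_univ _) (h0.const_mul 2) h2
    have hJ3 : ψ (-2 * m x) ≤ ∫ y, ψ (-2 * y) ∂(κ x) := by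
      have e : (-2 : ℝ) * m x = ∫ y, -2 * y ∂(κ x) := (integral_const_mul (-2) _).symm
      rw [e]
      exact hψ.map_integral_le hψc.continuousOn isClosed_univ
        (Eventually.of_forall fun y => Set.mem_univ _) (h0.const_mul (-2)) h3
    have hA2 : ∫ y, ψ (2 * y) ∂(κ x) ≤ A := by
      calc ∫ y, ψ (2 * y) ∂(κ x) ≤ ‖∫ y, ψ (2 * y) ∂(κ x)‖ := by
            rw [Real.norm_eq_abs]; exact le_abs_self _
        _ ≤ A := norm_integral_le_integral_norm _
    have hB2 : ∫ y, ψ (-2 * y) ∂(κ x) ≤ B := by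
      calc ∫ y, ψ (-2 * y) ∂(κ x) ≤ ‖∫ y, ψ (-2 * y) ∂(κ x)‖ := by
            rw [Real.norm_eq_abs]; exact le_abs_self _
        _ ≤ B := norm_integral_le_integral_norm _
    have hn2 : -ψ (2 * m x) ≤ ψ (-2 * m x) := by
      have h := aux_nonneg hψ hψ0 (2 * m x)
      have e : -(2 * m x) = -2 * m x := by ring
      rw [e] at h
      linarith
    have hn3 : -ψ (-2 * m x) ≤ ψ (2 * m x) := by
      have h := aux_nonneg hψ hψ0 (-2 * m x)
      have e : -(-2 * m x) = 2 * m x := by ring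
      rw [e] at h
      linarith
    have hb1 : |ψ (2 * m x)| ≤ A + B := by
      rw [abs_le]; constructor <;> linarith
    have hb2 : |ψ (-2 * m x)| ≤ A + B := by
      rw [abs_le]; constructor <;> linarith
    show ‖|ψ (2 * m x)| + |ψ (-2 * m x)|‖ ≤ ‖2 * (A + B)‖
    rw [Real.norm_eq_abs, Real.norm_eq_abs,
      abs_of_nonneg (by positivity : (0:ℝ) ≤ |ψ (2 * m x)| + |ψ (-2 * m x)|),
      abs_of_nonneg (by linarith : (0:ℝ) ≤ 2 * (A + B))]
    linarith
  -- integrability of the left-hand side integrand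
  have hDfst : Integrable (fun p : ℝ × ℝ => |ψ (2 * m p.1)| + |ψ (-2 * m p.1)|) (μ.prod μ) :=
    int_of_map measurable_fst Measure.fst_prod hGmint
  have hDsnd : Integrable (fun p : ℝ × ℝ => |ψ (2 * m p.2)| + |ψ (-2 * m p.2)|) (μ.prod μ) :=
    int_of_map measurable_snd Measure.snd_prod hGmint
  have hLm : StronglyMeasurable (fun p : ℝ × ℝ => ψ (m p.1 - m p.2)) :=
    hψc.comp_stronglyMeasurable
      ((hmm.comp_measurable measurable_fst).sub (hmm.comp_measurable measurable_snd))
  have hLswapm : StronglyMeasurable (fun p : ℝ × ℝ => ψ (m p.2 - m p.1)) :=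
    hψc.comp_stronglyMeasurable
      ((hmm.comp_measurable measurable_snd).sub (hmm.comp_measurable measurable_fst))
  have hLint : Integrable (fun p : ℝ × ℝ => ψ (m p.1 - m p.2)) (μ.prod μ) := by
    refine Integrable.mono ((hDfst.add hDsnd).div_const 2) hLm.aestronglyMeasurable
      (Eventually.of_forall fun p => ?_)
    rw [Real.norm_eq_abs, Real.norm_eq_abs]
    have h := aux_key hψ hψ0 (m p.1) (m p.2)
    have h2 := le_abs_self
      (((|ψ (2 * m p.1)| + |ψ (-2 * m p.1)|) + (|ψ (2 * m p.2)| + |ψ (-2 * m p.2)|)) / 2)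
    exact h.trans h2
  have hLswap : Integrable (fun p : ℝ × ℝ => ψ (m p.2 - m p.1)) (μ.prod μ) := by
    refine Integrable.mono ((hDfst.add hDsnd).div_const 2) hLswapm.aestronglyMeasurable
      (Eventually.of_forall fun p => ?_)
    rw [Real.norm_eq_abs, Real.norm_eq_abs]
    have h := aux_key hψ hψ0 (m p.2) (m p.1)
    have h2 := le_abs_self
      (((|ψ (2 * m p.1)| + |ψ (-2 * m p.1)|) + (|ψ (2 * m p.2)| + |ψ (-2 * m p.2)|)) / 2)
    have h3 := abs_nonneg (ψ (2 * m p.1))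
    calc |ψ (m p.2 - m p.1)|
        ≤ ((|ψ (2 * m p.2)| + |ψ (-2 * m p.2)|) + (|ψ (2 * m p.1)| + |ψ (-2 * m p.1)|)) / 2 := h
      _ = ((|ψ (2 * m p.1)| + |ψ (-2 * m p.1)|) + (|ψ (2 * m p.2)| + |ψ (-2 * m p.2)|)) / 2 := by
          ring
      _ ≤ _ := h2
  -- a.e. integrability on the fibers of the two-point kernel
  have haefst : ∀ᵐ p ∂(μ.prod μ), Integrable (fun y : ℝ => y) (κ p.1) := by
    have h : (μ.prod μ).map Prod.fst = μ := Measure.fst_prod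
    rw [← h] at haeid
    exact ae_of_ae_map measurable_fst.aemeasurable haeid
  have haesnd : ∀ᵐ p ∂(μ.prod μ), Integrable (fun y : ℝ => y) (κ p.2) := by
    have h : (μ.prod μ).map Prod.snd = μ := Measure.snd_prod
    rw [← h] at haeid
    exact ae_of_ae_map measurable_snd.aemeasurable haeid
  -- Jensen's inequality on the fibers
  have haeJ : ∀ᵐ p ∂(μ.prod μ), ψ (m p.1 - m p.2) ≤ ∫ q, F q ∂(ξ p) := by
    filter_upwards [hcompF.1, haefst, haesnd] with p hFp h1 h2
    have hq1 : Integrable (fun q : ℝ × ℝ => q.1) (ξ p) := by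
      rw [hξapp p]
      exact int_of_map measurable_fst Measure.fst_prod h1
    have hq2 : Integrable (fun q : ℝ × ℝ => q.2) (ξ p) := by
      rw [hξapp p]
      exact int_of_map measurable_snd Measure.snd_prod h2
    have hmean : ∫ q : ℝ × ℝ, (q.1 - q.2) ∂(ξ p) = m p.1 - m p.2 := by
      rw [integral_sub hq1 hq2]
      congr 1
      · rw [hξapp p]
        exact (integral_of_map measurable_fst Measure.fst_prod aestronglyMeasurable_id).symm
      · rw [hξapp p]
        exact (integral_of_map measurable_snd Measure.snd_prod aestronglyMeasurable_id).symm
    have hJ := hψ.map_integral_le (f := fun q : ℝ × ℝ => q.1 - q.2) hψc.continuousOn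
      isClosed_univ (Eventually.of_forall fun q => Set.mem_univ _) (hq1.sub hq2) hFp
    rwa [hmean] at hJ
  -- measurability and integrability of the fiberwise integral
  have hhm : StronglyMeasurable (fun p : ℝ × ℝ => ∫ q, F q ∂(ξ p)) :=
    StronglyMeasurable.integral_kernel_prod_right (κ := ξ) (f := fun _ q => F q)
      (hFcont.comp continuous_snd).stronglyMeasurable
  have hhint : Integrable (fun p : ℝ × ℝ => ∫ q, F q ∂(ξ p)) (μ.prod μ) := by
    refine Integrable.mono hcompF.2 hhm.aestronglyMeasurable
      (Eventually.of_forall fun p => ?_)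
    exact (norm_integral_le_integral_norm _).trans (le_abs_self _)
  -- the key identity
  have hstep : ∫ q, F q ∂(ν.prod ν) = ∫ p, ∫ q, F q ∂(ξ p) ∂(μ.prod μ) := by
    have e1 : ∫ q, F q ∂(ν.prod ν) = ∫ z : (ℝ × ℝ) × (ℝ × ℝ), F z.2 ∂((μ.prod μ) ⊗ₘ ξ) :=
      integral_of_map measurable_snd hsnd2' hFcont.aestronglyMeasurable
    rw [e1, Measure.integral_compProd hFc2]
  constructor
  · -- nonnegativity
    show 0 ≤ ∫ p : ℝ × ℝ, ψ (m p.1 - m p.2) ∂(μ.prod μ)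
    have hswap : ∫ p : ℝ × ℝ, ψ (m p.2 - m p.1) ∂(μ.prod μ)
        = ∫ p : ℝ × ℝ, ψ (m p.1 - m p.2) ∂(μ.prod μ) := by
      rw [← integral_prod_swap (fun p : ℝ × ℝ => ψ (m p.1 - m p.2))]
      rfl
    have hnn : 0 ≤ ∫ p : ℝ × ℝ, (ψ (m p.1 - m p.2) + ψ (m p.2 - m p.1)) ∂(μ.prod μ) := by
      refine integral_nonneg fun p => ?_
      have h := aux_nonneg hψ hψ0 (m p.1 - m p.2)
      have e : -(m p.1 - m p.2) = m p.2 - m p.1 := by ring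
      rwa [e] at h
    rw [integral_add hLint hLswap, hswap] at hnn
    linarith
  · -- the main inequality
    show ∫ p : ℝ × ℝ, ψ (m p.1 - m p.2) ∂(μ.prod μ) ≤ ∫ q : ℝ × ℝ, F q ∂(ν.prod ν)
    calc ∫ p : ℝ × ℝ, ψ (m p.1 - m p.2) ∂(μ.prod μ)
        ≤ ∫ p : ℝ × ℝ, ∫ q, F q ∂(ξ p) ∂(μ.prod μ) := integral_mono_ae hLint hhint haeJ
      _ = ∫ q : ℝ × ℝ, F q ∂(ν.prod ν) := hstep.symm
end

section
/- Let (Ω, 𝒜, P) be a probability space, X, Y : Ω → ℝ random variables with Y integrable, and ψ : ℝ → ℝ convex with ψ(0) = 0 such that ψ(2Y) and ψ(−2Y) are integrable. If Y = f(X) holds P-almost surely for some Borel measurable function f : ℝ → ℝ, then ∫_{ℝ×ℝ} ψ(E[Y|X = x₁] − E[Y|X = x₂]) d(P^X ⊗ P^X)(x₁,x₂) = ∫_{ℝ×ℝ} ψ(y₁ − y₂) d(P^Y ⊗ P^Y)(y₁,y₂). -/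
open MeasureTheory ProbabilityTheory Filter Set
open scoped ENNReal Topology

/-!
Since `Y = f(X)` almost surely, the joint law of `(X, Y)` is `P^X ⊗ δ_f`. Disintegrations are
unique `P^X`-almost everywhere, so `κ x = δ_{f x}` and `E[Y | X = x] = f x` for `P^X`-a.e. `x`.
The left-hand side is therefore `∫ ψ (f x₁ - f x₂) d(P^X ⊗ P^X)`, and the pushforward of
`P^X ⊗ P^X` under `f × f` is `P^Y ⊗ P^Y`.
-/

section Disintegration

variable {Ω α β : Type*} [MeasurableSpace Ω] [MeasurableSpace α] [MeasurableSpace β]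

lemma MeasureTheory.Measure.map_prodMk_eq_compProd_of_forall_prod
    (μ : Measure Ω) [IsFiniteMeasure μ] {X : Ω → α} {Y : Ω → β} (κ : Kernel α β) [IsSFiniteKernel κ]
    (hκ : ∀ A B, MeasurableSet A → MeasurableSet B →
      μ.map (fun ω => (X ω, Y ω)) (A ×ˢ B) = ∫⁻ x in A, κ x B ∂(μ.map X)) :
    μ.map (fun ω => (X ω, Y ω)) = μ.map X ⊗ₘ κ :=
  Measure.ext_prod fun hA hB => by rw [hκ _ _ hA hB, Measure.compProd_apply_prod hA hB]

lemma ProbabilityTheory.Kernel.ae_eq_deterministic_of_map_prodMk_eq_compProd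
    [MeasurableSpace.CountableOrCountablyGenerated α β]
    {μ : Measure Ω} [IsFiniteMeasure μ] {X : Ω → α} {Y : Ω → β} {f : α → β}
    {κ : Kernel α β} [IsFiniteKernel κ] (hX : AEMeasurable X μ) (hf : Measurable f)
    (hYf : Y =ᵐ[μ] f ∘ X) (hκ : μ.map (fun ω => (X ω, Y ω)) = μ.map X ⊗ₘ κ) :
    κ =ᵐ[μ.map X] Kernel.deterministic f hf := by
  refine Kernel.ae_eq_of_compProd_eq ?_
  rw [← hκ, Measure.compProd_deterministic,
    AEMeasurable.map_map_of_aemeasurable (by fun_prop) hX]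
  exact Measure.map_congr (by filter_upwards [hYf] with ω hω using by simp [hω])

end Disintegration

lemma integral_comp_prodMap_eq_integral_map_prod_map {α β E : Type*} [MeasurableSpace α]
    [MeasurableSpace β] [NormedAddCommGroup E] [NormedSpace ℝ E]
    (μ ν : Measure α) [SFinite μ] [SFinite ν] {g : α → β} (hg : Measurable g)
    {F : β × β → E} (hF : AEStronglyMeasurable F ((μ.map g).prod (ν.map g))) :
    ∫ p, F (g p.1, g p.2) ∂(μ.prod ν) = ∫ q, F q ∂((μ.map g).prod (ν.map g)) := by
  rw [Measure.map_prod_map _ _ hg hg] at hF ⊢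
  exact (integral_map (hg.prodMap hg).aemeasurable hF).symm

theorem stmt1_general {Ω : Type*} [MeasurableSpace Ω] (P : Measure Ω) [IsProbabilityMeasure P]
    (X Y : Ω → ℝ) (hX : Measurable X)
    (κ : Kernel ℝ ℝ) [IsMarkovKernel κ]
    (hκ : ∀ A B : Set ℝ, MeasurableSet A → MeasurableSet B →
      P.map (fun ω => (X ω, Y ω)) (A ×ˢ B) = ∫⁻ x in A, κ x B ∂(P.map X))
    (ψ : ℝ → ℝ) (hψ : ConvexOn ℝ Set.univ ψ)
    (f : ℝ → ℝ) (hf : Measurable f) (hYf : ∀ᵐ ω ∂P, Y ω = f (X ω)) :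
    ∫ x : ℝ × ℝ, ψ ((∫ y, y ∂(κ x.1)) - ∫ y, y ∂(κ x.2))
        ∂((P.map X).prod (P.map X)) =
      ∫ y : ℝ × ℝ, ψ (y.1 - y.2) ∂((P.map Y).prod (P.map Y)) := by
  set μ := P.map X
  have hmean : ∀ᵐ x ∂μ, ∫ y, y ∂(κ x) = f x := by
    filter_upwards [Kernel.ae_eq_deterministic_of_map_prodMk_eq_compProd hX.aemeasurable hf hYf
      (Measure.map_prodMk_eq_compProd_of_forall_prod P κ hκ)] with x hx
    rw [hx, Kernel.deterministic_apply, integral_dirac]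
  have hlawY : P.map Y = μ.map f := by
    rw [Measure.map_congr hYf, Measure.map_map hf hX]
    rfl
  have hψc : Continuous ψ := continuousOn_univ.mp (hψ.continuousOn isOpen_univ)
  calc _ = ∫ p : ℝ × ℝ, ψ (f p.1 - f p.2) ∂(μ.prod μ) := by
        refine integral_congr_ae ?_
        filter_upwards [Measure.quasiMeasurePreserving_fst.ae hmean,
          Measure.quasiMeasurePreserving_snd.ae hmean] with p h₁ h₂
        rw [h₁, h₂]
    _ = _ := by
        rw [hlawY]
        exact integral_comp_prodMap_eq_integral_map_prod_map μ μ hf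
          (hψc.comp (continuous_fst.sub continuous_snd)).aestronglyMeasurable

/-- If Y = f(X) almost surely, the sensitivity functional of
conditional expectations attains the value of the normalizing constant. -/
theorem stmt1 {Ω : Type*} [MeasurableSpace Ω] (P : Measure Ω) [IsProbabilityMeasure P]
    (X Y : Ω → ℝ) (hX : Measurable X) (hY : Measurable Y)
    (hYint : Integrable Y P)
    (κ : Kernel ℝ ℝ) [IsMarkovKernel κ]
    (hκ : ∀ A B : Set ℝ, MeasurableSet A → MeasurableSet B →
      P.map (fun ω => (X ω, Y ω)) (A ×ˢ B) = ∫⁻ x in A, κ x B ∂(P.map X))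
    (ψ : ℝ → ℝ) (hψ : ConvexOn ℝ Set.univ ψ) (hψ0 : ψ 0 = 0)
    (hint1 : Integrable (fun ω => ψ (2 * Y ω)) P)
    (hint2 : Integrable (fun ω => ψ (-2 * Y ω)) P)
    (f : ℝ → ℝ) (hf : Measurable f) (hYf : ∀ᵐ ω ∂P, Y ω = f (X ω)) :
    ∫ x : ℝ × ℝ, ψ ((∫ y, y ∂(κ x.1)) - ∫ y, y ∂(κ x.2))
        ∂((P.map X).prod (P.map X)) =
      ∫ y : ℝ × ℝ, ψ (y.1 - y.2) ∂((P.map Y).prod (P.map Y)) :=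
  stmt1_general P X Y hX κ hκ ψ hψ f hf hYf
end

section
/- Let (Ω, 𝒜, P) be a probability space, X, Y : Ω → ℝ random variables with Y integrable, and ψ : ℝ → ℝ convex and strictly convex at 0 with ψ(0) = 0 such that ψ(2Y) and ψ(−2Y) are integrable. Then ∫_{ℝ×ℝ} ψ(E[Y|X = x₁] − E[Y|X = x₂]) d(P^X ⊗ P^X)(x₁,x₂) = 0 if and only if E[Y|X = x] = E[Y] for P^X-almost every x (equivalently, the conditional expectation E[Y|X] equals E[Y] almost surely). -/
/-!
Since `ψ(0) = 0`, strict convexity at `0` makes the even part `(ψ t + ψ (-t)) / 2` positive off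
`0`. Symmetrising the integrand in `(x₁, x₂)` therefore gives a nonnegative function whose
integral vanishes exactly when `m(x₁) = m(x₂)` for almost every pair, `m` being the conditional
mean; that is, when `m` is almost surely constant, the constant being `E[Y]`. The
integrability of `ψ(2Y)` and `ψ(-2Y)` is what makes the integral meaningful: convexity gives
`ψ(a - b) ≤ (ψ(2a) + ψ(-2b)) / 2`, and Jensen's inequality for the kernel bounds `ψ(±2 m)`.
-/

open MeasureTheory ProbabilityTheory Filter Set

namespace ConvexOn

variable {ψ : ℝ → ℝ}

protected lemma continuous (hψ : ConvexOn ℝ univ ψ) : Continuous ψ :=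
  continuousOn_univ.1 (hψ.continuousOn isOpen_univ)

lemma neg_map_neg_le (hψ : ConvexOn ℝ univ ψ) (hψ0 : ψ 0 = 0) (t : ℝ) : -ψ (-t) ≤ ψ t := by
  have := hψ.2 (mem_univ t) (mem_univ (-t)) (by norm_num : (0 : ℝ) ≤ 1 / 2)
    (by norm_num : (0 : ℝ) ≤ 1 / 2) (by norm_num)
  simp only [smul_eq_mul, show (1 / 2 : ℝ) * t + 1 / 2 * -t = 0 by ring, hψ0] at this
  linarith

lemma map_sub_le (hψ : ConvexOn ℝ univ ψ) (a b : ℝ) :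
    ψ (a - b) ≤ (ψ (2 * a) + ψ (-2 * b)) / 2 := by
  have := hψ.2 (mem_univ (2 * a)) (mem_univ (-2 * b)) (by norm_num : (0 : ℝ) ≤ 1 / 2)
    (by norm_num : (0 : ℝ) ≤ 1 / 2) (by norm_num)
  simp only [smul_eq_mul, show (1 / 2 : ℝ) * (2 * a) + 1 / 2 * (-2 * b) = a - b by ring] at this
  linarith

lemma abs_map_sub_le (hψ : ConvexOn ℝ univ ψ) (hψ0 : ψ 0 = 0) (a b : ℝ) :
    |ψ (a - b)| ≤
      ((|ψ (2 * a)| + |ψ (-2 * a)|) + (|ψ (2 * b)| + |ψ (-2 * b)|)) / 2 := by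
  have hab := hψ.map_sub_le a b
  have hba := hψ.map_sub_le b a
  have hlower := hψ.neg_map_neg_le hψ0 (a - b)
  rw [neg_sub] at hlower
  rw [abs_le]
  constructor <;> linarith [le_abs_self (ψ (2 * a)), le_abs_self (ψ (-2 * a)),
    le_abs_self (ψ (2 * b)), le_abs_self (ψ (-2 * b)), abs_nonneg (ψ (2 * a)),
    abs_nonneg (ψ (-2 * a)), abs_nonneg (ψ (2 * b)), abs_nonneg (ψ (-2 * b))]

end ConvexOn

section Dispersion

variable {α : Type*} [MeasurableSpace α] {μ : Measure α} {f : α → ℝ} {ψ : ℝ → ℝ}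

lemma integrable_map_sub_prod [IsFiniteMeasure μ] (hψ : ConvexOn ℝ univ ψ) (hψ0 : ψ 0 = 0)
    (hf : Measurable f) (hplus : Integrable (fun x => ψ (2 * f x)) μ)
    (hminus : Integrable (fun x => ψ (-2 * f x)) μ) :
    Integrable (fun p : α × α => ψ (f p.1 - f p.2)) (μ.prod μ) := by
  set G : α → ℝ := fun x => |ψ (2 * f x)| + |ψ (-2 * f x)|
  have hG : Integrable G μ := hplus.abs.add hminus.abs
  refine Integrable.mono' (((hG.comp_fst μ).add (hG.comp_snd μ)).div_const 2) ?_
    (ae_of_all _ fun p => hψ.abs_map_sub_le hψ0 (f p.1) (f p.2))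
  exact (hψ.continuous.measurable.comp ((hf.comp measurable_fst).sub
    (hf.comp measurable_snd))).aestronglyMeasurable

lemma ae_eq_integral_of_ae_prod_eq [IsProbabilityMeasure μ]
    (h : ∀ᵐ p ∂μ.prod μ, f p.1 = f p.2) : ∀ᵐ x ∂μ, f x = ∫ y, f y ∂μ := by
  obtain ⟨x₀, hx₀⟩ := (Measure.ae_ae_of_ae_prod h).exists
  have hconst : f =ᵐ[μ] fun _ => f x₀ := hx₀.mono fun _ hy => hy.symm
  rw [integral_congr_ae hconst, integral_const, probReal_univ, one_smul]
  exact hconst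

lemma integral_map_sub_prod_eq_zero_iff [IsProbabilityMeasure μ] (hψ0 : ψ 0 = 0)
    (hψstrict : ∀ ε : ℝ, 0 < ε → ψ 0 < (ψ (-ε) + ψ ε) / 2)
    (hint : Integrable (fun p : α × α => ψ (f p.1 - f p.2)) (μ.prod μ)) :
    ∫ p, ψ (f p.1 - f p.2) ∂μ.prod μ = 0 ↔ ∀ᵐ x ∂μ, f x = ∫ y, f y ∂μ := by
  have hsym_pos : ∀ t ≠ 0, 0 < ψ t + ψ (-t) := by
    intro t ht
    rcases ht.lt_or_gt with ht | ht
    · simpa [hψ0] using hψstrict (-t) (neg_pos.2 ht)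
    · linarith [hψstrict t ht]
  have hsym_nonneg : ∀ t, 0 ≤ ψ t + ψ (-t) := fun t => by
    rcases eq_or_ne t 0 with rfl | ht
    · simp [hψ0]
    · exact (hsym_pos t ht).le
  constructor
  · intro h0
    have hswap : Integrable (fun p : α × α => ψ (f p.2 - f p.1)) (μ.prod μ) := hint.swap
    have hsum : ∫ p, (ψ (f p.1 - f p.2) + ψ (f p.2 - f p.1)) ∂μ.prod μ = 0 := by
      have hswap_eq : ∫ p, ψ (f p.2 - f p.1) ∂μ.prod μ = ∫ p, ψ (f p.1 - f p.2) ∂μ.prod μ :=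
        integral_prod_swap (fun p : α × α => ψ (f p.1 - f p.2))
      rw [integral_add hint hswap, hswap_eq, h0, add_zero]
    have hzero := (integral_eq_zero_iff_of_nonneg
      (fun p => by simpa [neg_sub] using hsym_nonneg (f p.1 - f p.2))
      (hint.add hswap)).1 hsum
    refine ae_eq_integral_of_ae_prod_eq (hzero.mono fun p hp => ?_)
    by_contra hne
    have := hsym_pos _ (sub_ne_zero.2 hne)
    simp only [neg_sub] at this
    simp only [Pi.add_apply, Pi.zero_apply] at hp
    linarith
  · intro h
    refine integral_eq_zero_of_ae ?_
    filter_upwards [Measure.quasiMeasurePreserving_fst.ae h,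
      Measure.quasiMeasurePreserving_snd.ae h] with p h₁ h₂
    simp [h₁, h₂, hψ0]

end Dispersion

section KernelMean

variable {α : Type*} [MeasurableSpace α] {μ : Measure α} {κ : Kernel α ℝ} {ψ : ℝ → ℝ}

lemma measurable_integral_kernel_id [IsSFiniteKernel κ] :
    Measurable fun x => ∫ y, y ∂κ x :=
  (measurable_snd.stronglyMeasurable.integral_kernel_prod_right (κ := κ)).measurable

lemma ConvexOn.map_mul_integral_kernel_le [IsMarkovKernel κ] (hψ : ConvexOn ℝ univ ψ) (c : ℝ)
    (hid : Integrable id (κ ∘ₘ μ)) (hψint : Integrable (fun y => ψ (c * y)) (κ ∘ₘ μ)) :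
    ∀ᵐ x ∂μ, ψ (c * ∫ y, y ∂κ x) ≤ ∫ y, ψ (c * y) ∂κ x := by
  filter_upwards [Measure.ae_integrable_of_integrable_comp hid,
    Measure.ae_integrable_of_integrable_comp hψint] with x hidx hψx
  have := hψ.map_integral_le hψ.continuous.continuousOn isClosed_univ
    (ae_of_all _ fun _ => mem_univ _) (hidx.const_mul c) hψx
  rwa [integral_const_mul] at this

lemma integrable_map_mul_integral_kernel [IsMarkovKernel κ] (hψ : ConvexOn ℝ univ ψ)
    (hψ0 : ψ 0 = 0) (c : ℝ) (hid : Integrable id (κ ∘ₘ μ))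
    (hplus : Integrable (fun y => ψ (c * y)) (κ ∘ₘ μ))
    (hminus : Integrable (fun y => ψ (-c * y)) (κ ∘ₘ μ)) :
    Integrable (fun x => ψ (c * ∫ y, y ∂κ x)) μ := by
  refine Integrable.mono' ((Measure.integrable_integral_norm_of_integrable_comp hplus).add
      (Measure.integrable_integral_norm_of_integrable_comp hminus))
    (hψ.continuous.measurable.comp (measurable_integral_kernel_id.const_mul c)).aestronglyMeasurable ?_
  filter_upwards [hψ.map_mul_integral_kernel_le c hid hplus,
    hψ.map_mul_integral_kernel_le (-c) hid hminus] with x hx_plus hx_minus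
  have hle_norm : ∀ g : ℝ → ℝ, ∫ y, g y ∂κ x ≤ ∫ y, ‖g y‖ ∂κ x := fun g =>
    (le_abs_self _).trans (norm_integral_le_integral_norm g)
  have hlower := hψ.neg_map_neg_le hψ0 (c * ∫ y, y ∂κ x)
  rw [← neg_mul] at hlower
  rw [Pi.add_apply, Real.norm_eq_abs, abs_le]
  constructor <;> linarith [hle_norm fun y => ψ (c * y), hle_norm fun y => ψ (-c * y),
    integral_nonneg (μ := κ x) (f := fun y => ‖ψ (c * y)‖) fun _ => norm_nonneg _,
    integral_nonneg (μ := κ x) (f := fun y => ‖ψ (-c * y)‖) fun _ => norm_nonneg _]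

end KernelMean

lemma Measure.eq_compProd_of_apply_prod {α β : Type*} [MeasurableSpace α] [MeasurableSpace β]
    {ρ : Measure (α × β)} [IsFiniteMeasure ρ] {μ : Measure α} [SFinite μ] {κ : Kernel α β}
    [IsSFiniteKernel κ]
    (h : ∀ A B, MeasurableSet A → MeasurableSet B → ρ (A ×ˢ B) = ∫⁻ x in A, κ x B ∂μ) :
    ρ = μ ⊗ₘ κ := by
  refine ext_of_generate_finite _ generateFrom_prod.symm isPiSystem_prod ?_ ?_
  · rintro _ ⟨A, hA, B, hB, rfl⟩
    rw [h A B hA hB, Measure.compProd_apply_prod hA hB]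
  · simpa [← univ_prod_univ, Measure.compProd_apply_prod] using h univ univ .univ .univ

/-- For ψ convex, strictly convex at 0, with ψ(0)=0, the sensitivity
functional of conditional expectations vanishes iff E[Y|X=x] = E[Y] for
P^X-almost every x. -/
theorem stmt2 {Ω : Type*} [MeasurableSpace Ω] (P : Measure Ω) [IsProbabilityMeasure P]
    (X Y : Ω → ℝ) (hX : Measurable X) (hY : Measurable Y)
    (hYint : Integrable Y P)
    (κ : Kernel ℝ ℝ) [IsMarkovKernel κ]
    (hκ : ∀ A B : Set ℝ, MeasurableSet A → MeasurableSet B →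
      P.map (fun ω => (X ω, Y ω)) (A ×ˢ B) = ∫⁻ x in A, κ x B ∂(P.map X))
    (ψ : ℝ → ℝ) (hψ : ConvexOn ℝ Set.univ ψ) (hψ0 : ψ 0 = 0)
    (hψstrict : ∀ ε : ℝ, 0 < ε → ψ 0 < (ψ (-ε) + ψ ε) / 2)
    (hint1 : Integrable (fun ω => ψ (2 * Y ω)) P)
    (hint2 : Integrable (fun ω => ψ (-2 * Y ω)) P) :
    ∫ x : ℝ × ℝ, ψ ((∫ y, y ∂(κ x.1)) - ∫ y, y ∂(κ x.2))
        ∂((P.map X).prod (P.map X)) = 0 ↔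
      ∀ᵐ x ∂(P.map X), (∫ y, y ∂(κ x)) = ∫ ω, Y ω ∂P := by
  set μ := P.map X
  have : IsProbabilityMeasure μ := Measure.isProbabilityMeasure_map hX.aemeasurable
  have hlaw : P.map (fun ω => (X ω, Y ω)) = μ ⊗ₘ κ := Measure.eq_compProd_of_apply_prod hκ
  have hYlaw : P.map Y = κ ∘ₘ μ := by
    rw [← Measure.snd_compProd, ← hlaw, Measure.snd_map_prodMk hX]
  have hψc : Continuous ψ := hψ.continuous
  have transfer : ∀ g : ℝ → ℝ, Continuous g → Integrable (fun ω => g (Y ω)) P →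
      Integrable g (κ ∘ₘ μ) := fun g hg hgY => by
    rwa [← hYlaw, integrable_map_measure hg.aestronglyMeasurable hY.aemeasurable]
  have hid : Integrable id (κ ∘ₘ μ) := transfer id continuous_id hYint
  have hplus : Integrable (fun y => ψ (2 * y)) (κ ∘ₘ μ) := transfer _ (by fun_prop) hint1
  have hminus : Integrable (fun y => ψ (-2 * y)) (κ ∘ₘ μ) := transfer _ (by fun_prop) hint2
  have hmean : ∫ x, (∫ y, y ∂κ x) ∂μ = ∫ ω, Y ω ∂P := calc
    _ = ∫ p, p.2 ∂(μ ⊗ₘ κ) := (Measure.integral_compProd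
          ((Measure.integrable_compProd_snd_iff aestronglyMeasurable_id).2 hid)).symm
    _ = ∫ ω, Y ω ∂P := by
      rw [← hlaw, integral_map (hX.prodMk hY).aemeasurable measurable_snd.aestronglyMeasurable]
  have hdisp := integrable_map_sub_prod hψ hψ0 measurable_integral_kernel_id
    (integrable_map_mul_integral_kernel hψ hψ0 2 hid hplus (by simpa using hminus))
    (integrable_map_mul_integral_kernel hψ hψ0 (-2) hid hminus (by simpa using hplus))
  rw [← hmean]
  exact integral_map_sub_prod_eq_zero_iff (f := fun x => ∫ y, y ∂κ x) hψ0 hψstrict hdisp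
end

section
/- Let (Ω, 𝒜, P) be a probability space, X, Y : Ω → ℝ random variables, and φ : [−1,1] → ℝ convex with φ(0) = 0. Then 0 ≤ ∫_{ℝ×ℝ} ∫_ℝ φ(F_{Y|X=x₁}(y) − F_{Y|X=x₂}(y)) dP^Y(y) d(P^X ⊗ P^X)(x₁,x₂) ≤ ∫_{ℝ×ℝ} ∫_ℝ φ(𝟙_{\{y₁ ≤ y\}} − 𝟙_{\{y₂ ≤ y\}}) dP^Y(y) d(P^Y ⊗ P^Y)(y₁,y₂). -/
open MeasureTheory ProbabilityTheory Set

/-! For fixed `y`, the values `a = F_{Y|X=x₁}(y)` and `b = F_{Y|X=x₂}(y)` lie in `[0, 1]`, and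
Jensen's inequality at the points `1, -1, 0` with the weights of two independent Bernoulli
variables gives `φ(a - b) ≤ a(1 - b) φ(1) + (1 - a) b φ(-1)`, with equality when `a, b ∈ {0, 1}`.
Integrating over `P^X ⊗ P^X`, and using that the `P^X`-mean of `F_{Y|X=·}(y)` is
`G(y) = P(Y ≤ y)`, bounds the inner integral by `(φ(1) + φ(-1)) G(y) (1 - G(y))`; this is exactly
the value of the same integral for the indicators `𝟙{yᵢ ≤ y}` under `P^Y ⊗ P^Y`. Nonnegativity
follows by symmetrising, since `φ(t) + φ(-t) ≥ 2 φ(0) = 0`. Fubini exchanges the order of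
integration throughout. -/

namespace ConvexOn

variable {φ : ℝ → ℝ} {a b : ℝ}

theorem measurable_domRestrict_Icc (hφ : ConvexOn ℝ (Icc a b) φ) :
    Measurable ((Icc a b).domRestrict φ) := by
  have hcont : ContinuousOn φ (Ioo a b) := by
    simpa only [interior_Icc] using hφ.continuousOn_interior
  refine ContinuousOn.measurable_of_countable_compl (s := Subtype.val ⁻¹' Ioo a b)
    (hcont.comp continuous_subtype_val.continuousOn (mapsTo_preimage _ _)) ?_
  refine ((countable_singleton a).insert b |>.preimage Subtype.val_injective).mono ?_
  rintro ⟨t, hta, htb⟩ ht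
  simp only [mem_compl_iff, mem_preimage, mem_Ioo, not_and_or, not_lt] at ht
  rcases ht with ht | ht
  · exact Or.inr (le_antisymm ht hta)
  · exact Or.inl (le_antisymm htb ht)

theorem apply_mem_Icc (hφ : ConvexOn ℝ (Icc a b) φ) {t : ℝ} (ht : t ∈ Icc a b) :
    φ t ∈ Icc (2 * φ ((a + b) / 2) - max (φ a) (φ b)) (max (φ a) (φ b)) := by
  have hab : a ≤ b := ht.1.trans ht.2
  have hmax : ∀ s ∈ Icc a b, φ s ≤ max (φ a) (φ b) := fun s hs =>
    hφ.le_max_of_mem_Icc (left_mem_Icc.2 hab) (right_mem_Icc.2 hab) hs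
  have hrefl : a + b - t ∈ Icc a b := ⟨by linarith [ht.2], by linarith [ht.1]⟩
  have hmid := hφ.2 ht hrefl (by norm_num : (0 : ℝ) ≤ 1 / 2) (by norm_num : (0 : ℝ) ≤ 1 / 2)
    (by norm_num)
  rw [smul_eq_mul, smul_eq_mul, smul_eq_mul, smul_eq_mul,
    show 1 / 2 * t + 1 / 2 * (a + b - t) = (a + b) / 2 by ring] at hmid
  exact ⟨by linarith [hmax _ hrefl], hmax t ht⟩

theorem integrable_comp {α : Type*} [MeasurableSpace α] {μ : Measure α} [IsFiniteMeasure μ]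
    (hφ : ConvexOn ℝ (Icc a b) φ) {g : α → ℝ} (hg : Measurable g) (hgab : ∀ x, g x ∈ Icc a b) :
    Integrable (fun x => φ (g x)) μ :=
  Integrable.of_mem_Icc _ _
    (hφ.measurable_domRestrict_Icc.comp (hg.subtype_mk (h := hgab))).aemeasurable
    (ae_of_all _ fun x => hφ.apply_mem_Icc (hgab x))

theorem two_mul_apply_zero_le {s : Set ℝ} (hφ : ConvexOn ℝ s φ) {t : ℝ} (ht : t ∈ s)
    (hnt : -t ∈ s) : 2 * φ 0 ≤ φ t + φ (-t) := by
  have h := hφ.2 ht hnt (by norm_num : (0 : ℝ) ≤ 1 / 2) (by norm_num : (0 : ℝ) ≤ 1 / 2)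
    (by norm_num)
  rw [smul_eq_mul, smul_eq_mul, smul_eq_mul, smul_eq_mul,
    show 1 / 2 * t + 1 / 2 * -t = 0 by ring] at h
  linarith

theorem apply_sub_le (hφ : ConvexOn ℝ (Icc (-1) 1) φ) (hφ0 : φ 0 = 0) {a b : ℝ}
    (ha : a ∈ Icc (0 : ℝ) 1) (hb : b ∈ Icc (0 : ℝ) 1) :
    φ (a - b) ≤ a * (1 - b) * φ 1 + (1 - a) * b * φ (-1) := by
  obtain ⟨ha0, ha1⟩ := ha
  obtain ⟨hb0, hb1⟩ := hb
  have h := hφ.map_sum_le (t := Finset.univ)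
    (w := ![a * (1 - b), (1 - a) * b, a * b + (1 - a) * (1 - b)]) (p := ![1, -1, 0])
    (fun i _ => by fin_cases i <;> simp <;> positivity)
    (by simp [Fin.sum_univ_three]; ring)
    (fun i _ => by fin_cases i <;> simp)
  simp only [Fin.sum_univ_three, Matrix.cons_val_zero, Matrix.cons_val_one, Matrix.cons_val_two,
    Matrix.head_cons, Matrix.tail_cons, smul_eq_mul, hφ0, mul_zero, add_zero] at h
  rwa [show a * (1 - b) * 1 + (1 - a) * b * -1 = a - b by ring] at h

end ConvexOn

theorem apply_sub_eq_of_mem_zero_one {φ : ℝ → ℝ} (hφ0 : φ 0 = 0) {a b : ℝ}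
    (ha : a = 0 ∨ a = 1) (hb : b = 0 ∨ b = 1) :
    φ (a - b) = a * (1 - b) * φ 1 + (1 - a) * b * φ (-1) := by
  rcases ha with rfl | rfl <;> rcases hb with rfl | rfl <;> norm_num [hφ0]

theorem sub_mem_Icc_neg_one_one {a b : ℝ} (ha : a ∈ Icc (0 : ℝ) 1) (hb : b ∈ Icc (0 : ℝ) 1) :
    a - b ∈ Icc (-1 : ℝ) 1 :=
  ⟨by linarith [ha.1, hb.2], by linarith [ha.2, hb.1]⟩

section ProductOfCopies

variable {α : Type*} [MeasurableSpace α] {m : Measure α} [IsProbabilityMeasure m]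
  {φ : ℝ → ℝ} {f : α → ℝ}

theorem integral_prod_mul_one_sub (hf : Integrable f m) :
    ∫ z, f z.1 * (1 - f z.2) ∂(m.prod m) = (∫ x, f x ∂m) * (1 - ∫ x, f x ∂m) := by
  rw [integral_prod_mul f (fun x => 1 - f x), integral_sub (integrable_const 1) hf]
  simp

theorem integral_prod_mul_one_sub_add (hf : Integrable f m) (c d : ℝ) :
    ∫ z, (f z.1 * (1 - f z.2) * c + (1 - f z.1) * f z.2 * d) ∂(m.prod m) =
      (c + d) * ((∫ x, f x ∂m) * (1 - ∫ x, f x ∂m)) := by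
  have hf' : Integrable (fun x => 1 - f x) m := (integrable_const 1).sub hf
  have hswap : ∫ z, (1 - f z.1) * f z.2 ∂(m.prod m) = ∫ z, f z.1 * (1 - f z.2) ∂(m.prod m) := by
    rw [← integral_prod_swap]
    simp only [Prod.fst_swap, Prod.snd_swap, mul_comm]
  rw [integral_add ((hf.mul_prod hf').mul_const c) ((hf'.mul_prod hf).mul_const d),
    integral_mul_const, integral_mul_const, hswap, integral_prod_mul_one_sub hf]
  ring

theorem integrable_comp_sub_prod (hφ : ConvexOn ℝ (Icc (-1) 1) φ) (hf : Measurable f)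
    (hf01 : ∀ x, f x ∈ Icc (0 : ℝ) 1) :
    Integrable (fun z : α × α => φ (f z.1 - f z.2)) (m.prod m) :=
  hφ.integrable_comp ((hf.comp measurable_fst).sub (hf.comp measurable_snd)) fun z =>
    sub_mem_Icc_neg_one_one (hf01 z.1) (hf01 z.2)

theorem integral_comp_sub_prod_nonneg (hφ : ConvexOn ℝ (Icc (-1) 1) φ) (hφ0 : φ 0 = 0)
    (hf : Measurable f) (hf01 : ∀ x, f x ∈ Icc (0 : ℝ) 1) :
    0 ≤ ∫ z, φ (f z.1 - f z.2) ∂(m.prod m) := by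
  have hmem : ∀ z : α × α, f z.1 - f z.2 ∈ Icc (-1 : ℝ) 1 := fun z =>
    sub_mem_Icc_neg_one_one (hf01 z.1) (hf01 z.2)
  have hint := integrable_comp_sub_prod (m := m) hφ hf hf01
  have hswap : ∫ z, φ (f z.2 - f z.1) ∂(m.prod m) = ∫ z, φ (f z.1 - f z.2) ∂(m.prod m) :=
    integral_prod_swap (fun z : α × α => φ (f z.1 - f z.2))
  have hsym : 0 ≤ ∫ z, (φ (f z.1 - f z.2) + φ (f z.2 - f z.1)) ∂(m.prod m) :=
    integral_nonneg fun z => by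
      have h := hφ.two_mul_apply_zero_le (hmem z)
        (by rw [neg_sub]; exact sub_mem_Icc_neg_one_one (hf01 z.2) (hf01 z.1))
      rw [neg_sub, hφ0, mul_zero] at h
      exact h
  have hint' : Integrable (fun z : α × α => φ (f z.2 - f z.1)) (m.prod m) := hint.swap
  rw [integral_add hint hint', hswap] at hsym
  linarith

theorem integral_comp_sub_prod_le (hφ : ConvexOn ℝ (Icc (-1) 1) φ) (hφ0 : φ 0 = 0)
    (hf : Measurable f) (hf01 : ∀ x, f x ∈ Icc (0 : ℝ) 1) :
    ∫ z, φ (f z.1 - f z.2) ∂(m.prod m) ≤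
      (φ 1 + φ (-1)) * ((∫ x, f x ∂m) * (1 - ∫ x, f x ∂m)) := by
  have hfi : Integrable f m := Integrable.of_mem_Icc 0 1 hf.aemeasurable (ae_of_all _ hf01)
  rw [← integral_prod_mul_one_sub_add hfi]
  refine integral_mono (integrable_comp_sub_prod hφ hf hf01) ?_
    fun z => hφ.apply_sub_le hφ0 (hf01 z.1) (hf01 z.2)
  have hf' : Integrable (fun x => 1 - f x) m := (integrable_const 1).sub hfi
  exact ((hfi.mul_prod hf').mul_const _).add ((hf'.mul_prod hfi).mul_const _)

theorem integral_comp_sub_prod_eq (hφ0 : φ 0 = 0) (hf : Integrable f m)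
    (hf01 : ∀ x, f x = 0 ∨ f x = 1) :
    ∫ z, φ (f z.1 - f z.2) ∂(m.prod m) =
      (φ 1 + φ (-1)) * ((∫ x, f x ∂m) * (1 - ∫ x, f x ∂m)) := by
  rw [← integral_prod_mul_one_sub_add hf]
  exact integral_congr_ae (ae_of_all _ fun z =>
    apply_sub_eq_of_mem_zero_one hφ0 (hf01 z.1) (hf01 z.2))

end ProductOfCopies

theorem integral_mem_Icc_zero_one {α : Type*} [MeasurableSpace α] {m : Measure α}
    [IsProbabilityMeasure m] {f : α → ℝ} (hf : Measurable f) (hf01 : ∀ x, f x ∈ Icc (0 : ℝ) 1) :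
    ∫ x, f x ∂m ∈ Icc (0 : ℝ) 1 := by
  refine ⟨integral_nonneg fun x => (hf01 x).1, ?_⟩
  calc ∫ x, f x ∂m ≤ ∫ _, (1 : ℝ) ∂m :=
        integral_mono (Integrable.of_mem_Icc 0 1 hf.aemeasurable (ae_of_all _ hf01))
          (integrable_const 1) fun x => (hf01 x).2
    _ = 1 := by simp

section IteratedIntegral

variable {β γ : Type*} [MeasurableSpace β] [MeasurableSpace γ] {ρ : Measure β} {μ : Measure γ}
  [IsProbabilityMeasure ρ] [IsProbabilityMeasure μ] {φ : ℝ → ℝ} {H : β → γ → ℝ}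

theorem integrable_comp_sub_prod_prod (hφ : ConvexOn ℝ (Icc (-1) 1) φ)
    (hH : Measurable (Function.uncurry H)) (hH01 : ∀ x y, H x y ∈ Icc (0 : ℝ) 1) :
    Integrable (fun p : (β × β) × γ => φ (H p.1.1 p.2 - H p.1.2 p.2)) ((ρ.prod ρ).prod μ) :=
  hφ.integrable_comp ((hH.comp (measurable_fst.fst.prodMk measurable_snd)).sub
      (hH.comp (measurable_fst.snd.prodMk measurable_snd)))
    fun p => sub_mem_Icc_neg_one_one (hH01 p.1.1 p.2) (hH01 p.1.2 p.2)

theorem integral_integral_comp_sub_swap (hφ : ConvexOn ℝ (Icc (-1) 1) φ)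
    (hH : Measurable (Function.uncurry H)) (hH01 : ∀ x y, H x y ∈ Icc (0 : ℝ) 1) :
    ∫ z, ∫ y, φ (H z.1 y - H z.2 y) ∂μ ∂(ρ.prod ρ) =
      ∫ y, ∫ z, φ (H z.1 y - H z.2 y) ∂(ρ.prod ρ) ∂μ :=
  integral_integral_swap (integrable_comp_sub_prod_prod hφ hH hH01)

theorem integral_integral_comp_sub_nonneg (hφ : ConvexOn ℝ (Icc (-1) 1) φ) (hφ0 : φ 0 = 0)
    (hH : Measurable (Function.uncurry H)) (hH01 : ∀ x y, H x y ∈ Icc (0 : ℝ) 1) :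
    0 ≤ ∫ z, ∫ y, φ (H z.1 y - H z.2 y) ∂μ ∂(ρ.prod ρ) := by
  rw [integral_integral_comp_sub_swap hφ hH hH01]
  exact integral_nonneg fun y =>
    integral_comp_sub_prod_nonneg hφ hφ0 hH.of_uncurry_right fun x => hH01 x y

theorem integral_integral_comp_sub_le (hφ : ConvexOn ℝ (Icc (-1) 1) φ) (hφ0 : φ 0 = 0)
    (hH : Measurable (Function.uncurry H)) (hH01 : ∀ x y, H x y ∈ Icc (0 : ℝ) 1) :
    ∫ z, ∫ y, φ (H z.1 y - H z.2 y) ∂μ ∂(ρ.prod ρ) ≤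
      ∫ y, (φ 1 + φ (-1)) * ((∫ x, H x y ∂ρ) * (1 - ∫ x, H x y ∂ρ)) ∂μ := by
  rw [integral_integral_comp_sub_swap hφ hH hH01]
  have hE01 : ∀ y, ∫ x, H x y ∂ρ ∈ Icc (0 : ℝ) 1 := fun y =>
    integral_mem_Icc_zero_one hH.of_uncurry_right fun x => hH01 x y
  have hEmeas : Measurable fun y => ∫ x, H x y ∂ρ :=
    hH.stronglyMeasurable.integral_prod_left.measurable
  have hbound : Integrable (fun y => (∫ x, H x y ∂ρ) * (1 - ∫ x, H x y ∂ρ)) μ :=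
    Integrable.of_mem_Icc 0 1 (hEmeas.mul (measurable_const.sub hEmeas)).aemeasurable
      (ae_of_all _ fun y => ⟨mul_nonneg (hE01 y).1 (sub_nonneg.2 (hE01 y).2),
        mul_le_one₀ (hE01 y).2 (sub_nonneg.2 (hE01 y).2) (by linarith [(hE01 y).1])⟩)
  exact integral_mono (integrable_comp_sub_prod_prod hφ hH hH01).integral_prod_right
    (hbound.const_mul _) fun y =>
      integral_comp_sub_prod_le hφ hφ0 hH.of_uncurry_right fun x => hH01 x y

theorem integral_integral_comp_sub_eq (hφ : ConvexOn ℝ (Icc (-1) 1) φ) (hφ0 : φ 0 = 0)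
    (hH : Measurable (Function.uncurry H)) (hH01 : ∀ x y, H x y = 0 ∨ H x y = 1) :
    ∫ z, ∫ y, φ (H z.1 y - H z.2 y) ∂μ ∂(ρ.prod ρ) =
      ∫ y, (φ 1 + φ (-1)) * ((∫ x, H x y ∂ρ) * (1 - ∫ x, H x y ∂ρ)) ∂μ := by
  have hH01' : ∀ x y, H x y ∈ Icc (0 : ℝ) 1 := fun x y => by
    rcases hH01 x y with h | h <;> simp [h]
  rw [integral_integral_comp_sub_swap hφ hH hH01']
  exact integral_congr_ae (ae_of_all _ fun y => integral_comp_sub_prod_eq hφ0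
    (Integrable.of_mem_Icc 0 1 hH.of_uncurry_right.aemeasurable
      (ae_of_all _ fun x => hH01' x y)) fun x => hH01 x y)

end IteratedIntegral

theorem ProbabilityTheory.Kernel.measurable_apply_Iic {α : Type*} [MeasurableSpace α]
    (κ : Kernel α ℝ) [IsSFiniteKernel κ] : Measurable fun p : α × ℝ => κ p.1 (Iic p.2) :=
  (κ.comap Prod.fst measurable_fst).measurable_kernel_prodMk_left
    (measurableSet_le measurable_snd measurable_fst.snd)

theorem lintegral_kernel_map_eq_map_snd {Ω α β : Type*} [MeasurableSpace Ω] [MeasurableSpace α]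
    [MeasurableSpace β] {P : Measure Ω} {X : Ω → α} {Y : Ω → β} (hX : Measurable X)
    (hY : Measurable Y) {κ : Kernel α β}
    (hκ : ∀ (A : Set α) (B : Set β), MeasurableSet A → MeasurableSet B →
      P.map (fun ω => (X ω, Y ω)) (A ×ˢ B) = ∫⁻ x in A, κ x B ∂(P.map X))
    {B : Set β} (hB : MeasurableSet B) :
    ∫⁻ x, κ x B ∂(P.map X) = P.map Y B := by
  rw [← Measure.restrict_univ (μ := P.map X), ← hκ univ B MeasurableSet.univ hB,
    Measure.map_apply (hX.prodMk hY) (MeasurableSet.univ.prod hB), Measure.map_apply hY hB,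
    mk_preimage_prod, preimage_univ, univ_inter]

/-- For φ : [-1,1] → ℝ convex with φ(0)=0, the sensitivity functional
of conditional distribution functions is nonnegative and bounded by the
corresponding normalizing integral. -/
theorem stmt5 {Ω : Type*} [MeasurableSpace Ω] (P : Measure Ω) [IsProbabilityMeasure P]
    (X Y : Ω → ℝ) (hX : Measurable X) (hY : Measurable Y)
    (κ : Kernel ℝ ℝ) [IsMarkovKernel κ]
    (hκ : ∀ A B : Set ℝ, MeasurableSet A → MeasurableSet B →
      P.map (fun ω => (X ω, Y ω)) (A ×ˢ B) = ∫⁻ x in A, κ x B ∂(P.map X))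
    (φ : ℝ → ℝ) (hφ : ConvexOn ℝ (Set.Icc (-1 : ℝ) 1) φ) (hφ0 : φ 0 = 0) :
    0 ≤ ∫ x : ℝ × ℝ, (∫ y, φ ((κ x.1 (Set.Iic y)).toReal - (κ x.2 (Set.Iic y)).toReal)
            ∂(P.map Y)) ∂((P.map X).prod (P.map X)) ∧
    ∫ x : ℝ × ℝ, (∫ y, φ ((κ x.1 (Set.Iic y)).toReal - (κ x.2 (Set.Iic y)).toReal)
            ∂(P.map Y)) ∂((P.map X).prod (P.map X)) ≤
      ∫ p : ℝ × ℝ, (∫ y, φ ((if p.1 ≤ y then (1 : ℝ) else 0) - (if p.2 ≤ y then (1 : ℝ) else 0))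
            ∂(P.map Y)) ∂((P.map Y).prod (P.map Y)) := by
  have := Measure.isProbabilityMeasure_map (μ := P) hX.aemeasurable
  have := Measure.isProbabilityMeasure_map (μ := P) hY.aemeasurable
  have hF : Measurable (Function.uncurry fun x y => (κ x (Iic y)).toReal) :=
    κ.measurable_apply_Iic.ennreal_toReal
  have hF01 : ∀ x y, (κ x (Iic y)).toReal ∈ Icc (0 : ℝ) 1 := fun x y =>
    ⟨ENNReal.toReal_nonneg, measureReal_le_one⟩
  have hI : Measurable (Function.uncurry fun t y : ℝ => if t ≤ y then (1 : ℝ) else 0) :=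
    Measurable.ite (measurableSet_le measurable_fst measurable_snd) measurable_const
      measurable_const
  have hI01 : ∀ t y : ℝ,
      (if t ≤ y then (1 : ℝ) else 0) = 0 ∨ (if t ≤ y then (1 : ℝ) else 0) = 1 :=
    fun t y => by split_ifs <;> simp
  have hmarg : ∀ y, ∫ x, (κ x (Iic y)).toReal ∂(P.map X) =
      ∫ t, (if t ≤ y then (1 : ℝ) else 0) ∂(P.map Y) := fun y => by
    rw [integral_toReal (κ.measurable_coe measurableSet_Iic).aemeasurable
      (ae_of_all _ fun x => measure_lt_top _ _),
      lintegral_kernel_map_eq_map_snd hX hY hκ measurableSet_Iic]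
    have hind : (fun t : ℝ => if t ≤ y then (1 : ℝ) else 0) = (Iic y).indicator 1 := by
      ext t; simp [indicator_apply]
    rw [hind, integral_indicator_one measurableSet_Iic]
    rfl
  refine ⟨integral_integral_comp_sub_nonneg hφ hφ0 hF hF01, ?_⟩
  calc _ ≤ _ := integral_integral_comp_sub_le hφ hφ0 hF hF01
    _ = _ := by simp_rw [hmarg]
    _ = _ := (integral_integral_comp_sub_eq hφ hφ0 hI hI01).symm
end

section
/- Let (Ω, 𝒜, P) be a probability space, X, Y : Ω → ℝ random variables, and φ : [−1,1] → ℝ convex with φ(0) = 0. If Y = f(X) holds P-almost surely for some Borel measurable f : ℝ → ℝ, then ∫_{ℝ×ℝ} ∫_ℝ φ(F_{Y|X=x₁}(y) − F_{Y|X=x₂}(y)) dP^Y(y) d(P^X ⊗ P^X)(x₁,x₂) = ∫_{ℝ×ℝ} ∫_ℝ φ(𝟙_{\{y₁ ≤ y\}} − 𝟙_{\{y₂ ≤ y\}}) dP^Y(y) d(P^Y ⊗ P^Y)(y₁,y₂). -/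
/-!
When `Y = f ∘ X` almost surely, the joint law of `(X, Y)` is the law of `X` pushed forward along
the graph of `f`, i.e. `P^X ⊗ₘ δ_f`; uniqueness of disintegrations then forces `κ x = δ_{f x}`
for `P^X`-a.e. `x`. Hence `F_{Y|X=x}(y) = 𝟙{f x ≤ y}`, so the left-hand side integrates the
right-hand integrand at `(f x₁, f x₂)` over `P^X ⊗ P^X`, which `f × f` pushes forward to `P^Y ⊗ P^Y`.
-/

open MeasureTheory ProbabilityTheory Set

section Disintegration

variable {α β : Type*} {mα : MeasurableSpace α} {mβ : MeasurableSpace β}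

lemma MeasureTheory.Measure.eq_compProd_of_forall_prod {ν : Measure (α × β)} [IsFiniteMeasure ν]
    {μ : Measure α} [SFinite μ] {κ : Kernel α β} [IsSFiniteKernel κ]
    (h : ∀ s t, MeasurableSet s → MeasurableSet t → ν (s ×ˢ t) = ∫⁻ x in s, κ x t ∂μ) :
    ν = μ ⊗ₘ κ :=
  Measure.ext_prod fun hs ht => by rw [Measure.compProd_apply_prod hs ht, h _ _ hs ht]

lemma ProbabilityTheory.Kernel.ae_eq_dirac_of_compProd_eq_map
    [MeasurableSpace.CountableOrCountablyGenerated α β]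
    {μ : Measure α} [IsFiniteMeasure μ] {κ : Kernel α β} [IsFiniteKernel κ]
    {f : α → β} (hf : Measurable f) (h : μ ⊗ₘ κ = μ.map fun x => (x, f x)) :
    ∀ᵐ x ∂μ, κ x = Measure.dirac (f x) := by
  rw [← Measure.compProd_deterministic hf] at h
  filter_upwards [Kernel.ae_eq_of_compProd_eq h] with x hx
  rw [hx, Kernel.deterministic_apply]

end Disintegration

section RandomVariables

variable {Ω α β : Type*} {mΩ : MeasurableSpace Ω} {mα : MeasurableSpace α}
  {mβ : MeasurableSpace β} {P : Measure Ω} {X : Ω → α} {Y : Ω → β} {f : α → β}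

lemma MeasureTheory.Measure.map_eq_map_map_of_ae_eq_comp (hX : Measurable X) (hf : Measurable f)
    (hYf : ∀ᵐ ω ∂P, Y ω = f (X ω)) : P.map Y = (P.map X).map f := by
  rw [Measure.map_map hf hX]
  exact Measure.map_congr hYf

lemma MeasureTheory.Measure.map_prodMk_eq_map_graph (hX : Measurable X) (hf : Measurable f)
    (hYf : ∀ᵐ ω ∂P, Y ω = f (X ω)) :
    P.map (fun ω => (X ω, Y ω)) = (P.map X).map fun x => (x, f x) := by
  rw [Measure.map_map (measurable_id'.prodMk hf) hX]
  exact Measure.map_congr (hYf.mono fun ω h => by simp [h])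

end RandomVariables

lemma measurable_comp_ite_sub_ite {α : Type*} {mα : MeasurableSpace α} (φ : ℝ → ℝ)
    {p q : α → Prop} [DecidablePred p] [DecidablePred q]
    (hp : MeasurableSet {z | p z}) (hq : MeasurableSet {z | q z}) :
    Measurable fun z => φ ((if p z then 1 else 0) - (if q z then 1 else 0)) := by
  simp only [apply_ite φ, ite_sub, sub_ite]
  exact Measurable.ite hq (Measurable.ite hp measurable_const measurable_const)
    (Measurable.ite hp measurable_const measurable_const)

lemma MeasureTheory.Measure.toReal_dirac_apply {α : Type*} [MeasurableSpace α]
    [MeasurableSingletonClass α] (a : α) (s : Set α) [Decidable (a ∈ s)] :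
    (Measure.dirac a s).toReal = if a ∈ s then 1 else 0 := by
  rw [Measure.dirac_apply]
  split_ifs with h <;> simp [h]

theorem stmt6_general {Ω : Type*} [MeasurableSpace Ω] (P : Measure Ω) [IsProbabilityMeasure P]
    (X Y : Ω → ℝ) (hX : Measurable X)
    (κ : Kernel ℝ ℝ) [IsMarkovKernel κ]
    (hκ : ∀ A B : Set ℝ, MeasurableSet A → MeasurableSet B →
      P.map (fun ω => (X ω, Y ω)) (A ×ˢ B) = ∫⁻ x in A, κ x B ∂(P.map X))
    (φ : ℝ → ℝ)
    (f : ℝ → ℝ) (hf : Measurable f) (hYf : ∀ᵐ ω ∂P, Y ω = f (X ω)) :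
    ∫ x : ℝ × ℝ, (∫ y, φ ((κ x.1 (Set.Iic y)).toReal - (κ x.2 (Set.Iic y)).toReal)
            ∂(P.map Y)) ∂((P.map X).prod (P.map X)) =
      ∫ p : ℝ × ℝ, (∫ y, φ ((if p.1 ≤ y then (1 : ℝ) else 0) - (if p.2 ≤ y then (1 : ℝ) else 0))
            ∂(P.map Y)) ∂((P.map Y).prod (P.map Y)) := by
  have : IsProbabilityMeasure (P.map X) := Measure.isProbabilityMeasure_map hX.aemeasurable
  have hjoint : P.map X ⊗ₘ κ = (P.map X).map fun x => (x, f x) := by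
    rw [← Measure.map_prodMk_eq_map_graph hX hf hYf]
    exact (Measure.eq_compProd_of_forall_prod hκ).symm
  have hdirac := Kernel.ae_eq_dirac_of_compProd_eq_map hf hjoint
  set g : ℝ × ℝ → ℝ := fun p => ∫ y, φ ((if p.1 ≤ y then (1 : ℝ) else 0) -
    (if p.2 ≤ y then (1 : ℝ) else 0)) ∂(P.map Y)
  have hg : StronglyMeasurable g :=
    (measurable_comp_ite_sub_ite φ (measurableSet_le measurable_fst.fst measurable_snd)
      (measurableSet_le measurable_fst.snd measurable_snd)).stronglyMeasurable.integral_prod_right'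
  calc _ = ∫ x : ℝ × ℝ, g (f x.1, f x.2) ∂((P.map X).prod (P.map X)) := by
        refine integral_congr_ae ?_
        filter_upwards [Measure.quasiMeasurePreserving_fst.ae hdirac,
          Measure.quasiMeasurePreserving_snd.ae hdirac] with x h₁ h₂
        simp only [h₁, h₂, Measure.toReal_dirac_apply, mem_Iic, g]
    _ = ∫ p, g p ∂((P.map X).prod (P.map X)).map (Prod.map f f) :=
        (integral_map (hf.prodMap hf).aemeasurable hg.aestronglyMeasurable).symm
    _ = _ := by
        rw [← Measure.map_prod_map _ _ hf hf,
          ← Measure.map_eq_map_map_of_ae_eq_comp hX hf hYf]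

/-- If Y = f(X) almost surely, the sensitivity functional of
conditional distribution functions equals the normalizing integral. -/
theorem stmt6 {Ω : Type*} [MeasurableSpace Ω] (P : Measure Ω) [IsProbabilityMeasure P]
    (X Y : Ω → ℝ) (hX : Measurable X) (hY : Measurable Y)
    (κ : Kernel ℝ ℝ) [IsMarkovKernel κ]
    (hκ : ∀ A B : Set ℝ, MeasurableSet A → MeasurableSet B →
      P.map (fun ω => (X ω, Y ω)) (A ×ˢ B) = ∫⁻ x in A, κ x B ∂(P.map X))
    (φ : ℝ → ℝ) (hφ : ConvexOn ℝ (Set.Icc (-1 : ℝ) 1) φ) (hφ0 : φ 0 = 0)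
    (f : ℝ → ℝ) (hf : Measurable f) (hYf : ∀ᵐ ω ∂P, Y ω = f (X ω)) :
    ∫ x : ℝ × ℝ, (∫ y, φ ((κ x.1 (Set.Iic y)).toReal - (κ x.2 (Set.Iic y)).toReal)
            ∂(P.map Y)) ∂((P.map X).prod (P.map X)) =
      ∫ p : ℝ × ℝ, (∫ y, φ ((if p.1 ≤ y then (1 : ℝ) else 0) - (if p.2 ≤ y then (1 : ℝ) else 0))
            ∂(P.map Y)) ∂((P.map Y).prod (P.map Y)) :=
  stmt6_general P X Y hX κ hκ φ f hf hYf
end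

section
/- Let (Ω, 𝒜, P) be a probability space, X, Y : Ω → ℝ random variables, and φ : [−1,1] → ℝ convex and strictly convex at 0 with φ(0) = 0. Then ∫_{ℝ×ℝ} ∫_ℝ φ(F_{Y|X=x₁}(y) − F_{Y|X=x₂}(y)) dP^Y(y) d(P^X ⊗ P^X)(x₁,x₂) = 0 if and only if X and Y are independent. -/
/-!
Write `Δ(x₁, x₂, y) = F_{Y|X=x₁}(y) - F_{Y|X=x₂}(y)`. Swapping `x₁` and `x₂` changes the sign of
`Δ`, so the functional equals half the integral of `φ(Δ) + φ(-Δ)`, which is nonnegative by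
convexity and vanishes only where `Δ = 0` by strict convexity at `0`. Hence the functional vanishes
iff for `P^Y`-a.e. `y` the map `x ↦ F_{Y|X=x}(y)` is `P^X`-a.e. constant, necessarily equal to its
mean `F_Y(y)`. The mixtures `∫_A κ(x, ·) dP^X` are absolutely continuous with respect to `P^Y`, and
two such measures whose distribution functions agree `P^Y`-a.e. are equal; so `κ(x, ·) = P^Y` for
`P^X`-a.e. `x`, which is independence.
-/

open MeasureTheory ProbabilityTheory Filter Set
open scoped ENNReal Topology

theorem exists_monotone_seq_mem_cofinal {α : Type*} [ConditionallyCompleteLinearOrder α]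
    [TopologicalSpace α] [OrderTopology α] [FirstCountableTopology α] {S : Set α}
    (hS : S.Nonempty) (hS' : BddAbove S) :
    ∃ u : ℕ → α, Monotone u ∧ (∀ n, u n ∈ S) ∧ ∀ x ∈ S, ∃ n, x ≤ u n := by
  by_cases hmax : sSup S ∈ S
  · exact ⟨fun _ => sSup S, monotone_const, fun _ => hmax, fun x hx => ⟨0, le_csSup hS' hx⟩⟩
  obtain ⟨u, hu_mono, hu_lim, hu_mem⟩ := exists_seq_tendsto_sSup hS hS'
  refine ⟨u, hu_mono, hu_mem, fun x hx => ?_⟩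
  have hlt : x < sSup S := (le_csSup hS' hx).lt_of_ne fun h => hmax (h ▸ hx)
  exact (hu_lim.eventually (lt_mem_nhds hlt)).exists.imp fun _ h => h.le

theorem MeasureTheory.Measure.eq_of_ae_measure_Iic_eq {α : Type*}
    [ConditionallyCompleteLinearOrder α] [TopologicalSpace α] [OrderTopology α]
    [SecondCountableTopology α] [MeasurableSpace α] [BorelSpace α]
    {ρ σ ν : Measure α} [IsFiniteMeasure ρ] (hρ : ρ ≪ ν) (hσ : σ ≪ ν)
    (h : ∀ᵐ y ∂ν, ρ (Iic y) = σ (Iic y)) : ρ = σ := by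
  set D := {y | ρ (Iic y) = σ (Iic y)}
  -- `ρ` and `σ` live on `D`, and `D ∩ Iic y₀` is exhausted by countably many `D ∩ Iic d`, `d ∈ D`.
  have hρD : ρ Dᶜ = 0 := hρ (ae_iff.mp h)
  have hσD : σ Dᶜ = 0 := hσ (ae_iff.mp h)
  refine Measure.ext_of_Iic ρ σ fun y₀ => ?_
  rw [← measure_inter_conull hρD, ← measure_inter_conull hσD]
  rcases (Iic y₀ ∩ D).eq_empty_or_nonempty with hS | hS
  · simp [hS]
  obtain ⟨u, hu_mono, hu_mem, hu_cof⟩ :=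
    exists_monotone_seq_mem_cofinal hS ⟨y₀, fun _ hy => hy.1⟩
  have hS_eq : Iic y₀ ∩ D = ⋃ n, Iic (u n) ∩ D := by
    refine Subset.antisymm (fun y hy => ?_) (iUnion_subset fun n y hy => ?_)
    · obtain ⟨n, hn⟩ := hu_cof y hy
      exact mem_iUnion.mpr ⟨n, hn, hy.2⟩
    · exact ⟨hy.1.trans (hu_mem n).1, hy.2⟩
  have hmono : Monotone fun n => Iic (u n) ∩ D := fun m n hmn =>
    inter_subset_inter_left _ (Iic_subset_Iic.mpr (hu_mono hmn))
  rw [hS_eq, hmono.measure_iUnion, hmono.measure_iUnion]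
  simp_rw [measure_inter_conull hρD, measure_inter_conull hσD]
  exact iSup_congr fun n => (hu_mem n).2

theorem ContinuousOn.exists_measurable_eqOn_Icc {β : Type*} [TopologicalSpace β]
    [MeasurableSpace β] [BorelSpace β] [Zero β] {f : ℝ → β} {a b : ℝ}
    (hf : ContinuousOn f (Ioo a b)) : ∃ g : ℝ → β, Measurable g ∧ EqOn f g (Icc a b) := by
  classical
  refine ⟨(Ioo a b).piecewise f (({a, b} : Set ℝ).indicator f), ?_, fun x hx => ?_⟩
  · refine measurable_of_restrict_of_restrict_compl (measurableSet_Ioo (a := a) (b := b)) ?_ ?_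
    · rw [domRestrict_piecewise]
      exact hf.domRestrict.measurable
    · rw [domRestrict_piecewise_compl]
      refine (measurable_of_measurable_on_compl_finite _ (toFinite {a, b}) ?_).comp
        measurable_subtype_coe
      convert measurable_const (a := (0 : β)) with ⟨x, hx⟩
      exact indicator_of_notMem hx f
  · by_cases hx' : x ∈ Ioo a b
    · exact (piecewise_eq_of_mem _ _ _ hx').symm
    · rw [piecewise_eq_of_notMem _ _ _ hx', indicator_of_mem]
      rcases eq_or_lt_of_le hx.1 with rfl | hax
      · exact mem_insert _ _
      · exact mem_insert_of_mem _ (eq_of_le_of_not_lt hx.2 fun hxb => hx' ⟨hax, hxb⟩)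

theorem ConvexOn.two_mul_map_zero_le {E : Type*} [AddCommGroup E] [Module ℝ E] {s : Set E}
    {φ : E → ℝ} (hφ : ConvexOn ℝ s φ) {x : E} (hx : x ∈ s) (hx' : -x ∈ s) :
    2 * φ 0 ≤ φ x + φ (-x) := by
  have h := hφ.2 hx hx' (by norm_num : (0 : ℝ) ≤ 1 / 2) (by norm_num : (0 : ℝ) ≤ 1 / 2)
    (by norm_num)
  rw [smul_neg, ← sub_eq_add_neg, sub_self, smul_eq_mul, smul_eq_mul] at h
  linarith

theorem ConvexOn.abs_le_max_of_mem_Icc {φ : ℝ → ℝ} {a t : ℝ} (hφ : ConvexOn ℝ (Icc (-a) a) φ)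
    (hφ0 : φ 0 = 0) (ht : t ∈ Icc (-a) a) : |φ t| ≤ max (φ (-a)) (φ a) := by
  have ha : -a ≤ a := ht.1.trans ht.2
  have hle : ∀ s ∈ Icc (-a) a, φ s ≤ max (φ (-a)) (φ a) := fun s hs =>
    hφ.le_on_segment (left_mem_Icc.mpr ha) (right_mem_Icc.mpr ha) (segment_eq_Icc ha ▸ hs)
  have ht' : -t ∈ Icc (-a) a := ⟨neg_le_neg ht.2, by linarith [ht.1]⟩
  have hsym := hφ.two_mul_map_zero_le ht ht'
  rw [abs_le]
  constructor <;> linarith [hle t ht, hle (-t) ht']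

theorem eq_zero_of_map_add_map_neg_le {φ : ℝ → ℝ}
    (hφstrict : ∀ ε : ℝ, 0 < ε → ε ≤ 1 → φ 0 < (φ (-ε) + φ ε) / 2)
    {t : ℝ} (ht : t ∈ Icc (-1 : ℝ) 1) (h : φ t + φ (-t) ≤ 2 * φ 0) : t = 0 := by
  by_contra ht0
  have := hφstrict |t| (abs_pos.mpr ht0) (abs_le.mpr ht)
  rcases abs_cases t with ⟨habs, -⟩ | ⟨habs, -⟩ <;> rw [habs] at this
  · linarith
  · rw [neg_neg] at this
    linarith

theorem ae_add_swap_eq_zero_of_integral_eq_zero {α : Type*} [MeasurableSpace α]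
    {μ : Measure α} [SFinite μ] {f : α × α → ℝ} (hf : Integrable f (μ.prod μ))
    (hf_nonneg : ∀ p, 0 ≤ f p + f p.swap)
    (h : ∫ p, f p ∂(μ.prod μ) = 0) : ∀ᵐ p ∂(μ.prod μ), f p + f p.swap = 0 := by
  have hf_swap : Integrable (fun p => f p.swap) (μ.prod μ) := hf.swap
  refine (integral_eq_zero_iff_of_nonneg hf_nonneg (hf.add hf_swap)).mp ?_
  rw [integral_add hf hf_swap, integral_prod_swap f, h, add_zero]

section Sensitivity

variable {α β : Type*} [MeasurableSpace α] [MeasurableSpace β] {μ : Measure α} {ν : Measure β}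
  {φ : ℝ → ℝ}

theorem ae_ae_eq_of_integral_map_sub_eq_zero_of_measurable [IsFiniteMeasure μ]
    [IsFiniteMeasure ν] {F : α → β → ℝ} (hF : Measurable (Function.uncurry F))
    (hF01 : ∀ x y, F x y ∈ Icc (0 : ℝ) 1) (hφm : Measurable φ)
    (hφ : ConvexOn ℝ (Icc (-1) 1) φ) (hφ0 : φ 0 = 0)
    (hφstrict : ∀ ε : ℝ, 0 < ε → ε ≤ 1 → φ 0 < (φ (-ε) + φ ε) / 2)
    (h : ∫ p : α × α, ∫ y, φ (F p.1 y - F p.2 y) ∂ν ∂(μ.prod μ) = 0) :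
    ∀ᵐ p ∂(μ.prod μ), ∀ᵐ y ∂ν, F p.1 y = F p.2 y := by
  set Δ : α × α → β → ℝ := fun p y => F p.1 y - F p.2 y
  have hΔ : ∀ p y, Δ p y ∈ Icc (-1 : ℝ) 1 := fun p y => by
    obtain ⟨h₁, h₂⟩ := hF01 p.1 y
    obtain ⟨h₃, h₄⟩ := hF01 p.2 y
    constructor <;> linarith
  have hΔm : Measurable (Function.uncurry Δ) :=
    (hF.comp (measurable_fst.fst.prodMk measurable_snd)).sub
      (hF.comp (measurable_fst.snd.prodMk measurable_snd))
  have hbound : ∀ p y, ‖φ (Δ p y)‖ ≤ max (φ (-1)) (φ 1) := fun p y =>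
    hφ.abs_le_max_of_mem_Icc hφ0 (hΔ p y)
  have hinner : ∀ p, Integrable (fun y => φ (Δ p y)) ν := fun p =>
    .of_bound (hφm.comp (hΔm.comp measurable_prodMk_left)).aestronglyMeasurable _
      (ae_of_all _ (hbound p))
  have houter : Integrable (fun p => ∫ y, φ (Δ p y) ∂ν) (μ.prod μ) :=
    .of_bound (hφm.comp hΔm).stronglyMeasurable.integral_prod_right'.aestronglyMeasurable _
      (ae_of_all _ fun p => norm_integral_le_of_norm_le_const (ae_of_all _ (hbound p)))
  have hneg : ∀ p y, Δ p.swap y = -Δ p y := fun p y => (neg_sub _ _).symm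
  have hsum : ∀ p, ∫ y, φ (Δ p y) ∂ν + ∫ y, φ (Δ p.swap y) ∂ν
      = ∫ y, (φ (Δ p y) + φ (-Δ p y)) ∂ν := fun p => by
    rw [← integral_add (hinner p) (hinner p.swap)]
    simp only [hneg]
  have hnonneg : ∀ p y, 0 ≤ φ (Δ p y) + φ (-Δ p y) := fun p y => by
    have := hφ.two_mul_map_zero_le (hΔ p y) (hneg p y ▸ hΔ p.swap y)
    rwa [hφ0, mul_zero] at this
  filter_upwards [ae_add_swap_eq_zero_of_integral_eq_zero houter
    (fun p => hsum p ▸ integral_nonneg (hnonneg p)) h] with p hp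
  rw [hsum, integral_eq_zero_iff_of_nonneg (hnonneg p)
    ((hinner p).add (by simpa only [hneg] using hinner p.swap))] at hp
  filter_upwards [hp] with y hy
  refine sub_eq_zero.mp (eq_zero_of_map_add_map_neg_le hφstrict (hΔ p y) ?_)
  rw [hφ0, mul_zero]
  exact hy.le

theorem ae_ae_eq_of_integral_map_sub_eq_zero [IsFiniteMeasure μ] [IsFiniteMeasure ν]
    {F : α → β → ℝ} (hF : Measurable (Function.uncurry F))
    (hF01 : ∀ x y, F x y ∈ Icc (0 : ℝ) 1) (hφ : ConvexOn ℝ (Icc (-1) 1) φ) (hφ0 : φ 0 = 0)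
    (hφstrict : ∀ ε : ℝ, 0 < ε → ε ≤ 1 → φ 0 < (φ (-ε) + φ ε) / 2)
    (h : ∫ p : α × α, ∫ y, φ (F p.1 y - F p.2 y) ∂ν ∂(μ.prod μ) = 0) :
    ∀ᵐ p ∂(μ.prod μ), ∀ᵐ y ∂ν, F p.1 y = F p.2 y := by
  -- `φ` need not be measurable; replace it by a measurable function that agrees with it on
  -- `[-1, 1]`, where `φ` is continuous except possibly at the endpoints.
  obtain ⟨ψ, hψm, hφψ⟩ := (interior_Icc (a := (-1 : ℝ)) (b := 1) ▸
    hφ.continuousOn_interior).exists_measurable_eqOn_Icc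
  have hmem : ∀ {ε : ℝ}, 0 ≤ ε → ε ≤ 1 → -ε ∈ Icc (-1 : ℝ) 1 ∧ ε ∈ Icc (-1 : ℝ) 1 :=
    fun h₀ h₁ => ⟨⟨neg_le_neg h₁, by linarith⟩, ⟨by linarith, h₁⟩⟩
  have hψ0 : ψ 0 = 0 := hφψ (hmem le_rfl zero_le_one).2 ▸ hφ0
  refine ae_ae_eq_of_integral_map_sub_eq_zero_of_measurable hF hF01 hψm (hφ.congr hφψ) hψ0
    (fun ε hε hε₁ => ?_) ?_
  · rw [← hφψ (hmem hε.le hε₁).1, ← hφψ (hmem hε.le hε₁).2, ← hφψ (hmem le_rfl zero_le_one).2]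
    exact hφstrict ε hε hε₁
  · refine h ▸ integral_congr_ae (ae_of_all _ fun p => integral_congr_ae (ae_of_all _ fun y => ?_))
    obtain ⟨h₁, h₂⟩ := hF01 p.1 y
    obtain ⟨h₃, h₄⟩ := hF01 p.2 y
    exact (hφψ ⟨by linarith, by linarith⟩).symm

end Sensitivity

section Kernel

variable {α : Type*} [MeasurableSpace α] {μ : Measure α}

theorem MeasureTheory.Measure.compProd_eq_prod_iff {β : Type*} [MeasurableSpace β]
    [MeasurableSpace.CountableOrCountablyGenerated α β] [IsFiniteMeasure μ] {κ : Kernel α β}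
    [IsFiniteKernel κ] {ν : Measure β} [IsFiniteMeasure ν] :
    μ ⊗ₘ κ = μ.prod ν ↔ ∀ᵐ x ∂μ, κ x = ν := by
  rw [← Measure.compProd_const, Kernel.compProd_eq_iff]
  rfl

theorem ProbabilityTheory.Kernel.measurable_measure_Iic {κ : Kernel α ℝ} [IsSFiniteKernel κ] :
    Measurable fun p : α × ℝ => κ p.1 (Iic p.2) :=
  (Kernel.prodMkRight ℝ κ).measurable_kernel_prodMk_left
    (measurableSet_le measurable_snd measurable_fst.snd :
      MeasurableSet {q : (α × ℝ) × ℝ | q.2 ≤ q.1.2})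

theorem ae_eq_lintegral_of_ae_prod_eq [IsProbabilityMeasure μ] {f : α → ℝ≥0∞}
    (h : ∀ᵐ p ∂(μ.prod μ), f p.1 = f p.2) : ∀ᵐ x ∂μ, f x = ∫⁻ z, f z ∂μ := by
  filter_upwards [Measure.ae_ae_of_ae_prod h] with x hx
  rw [lintegral_congr_ae (hx.mono fun _ hz => hz.symm), lintegral_const, measure_univ, mul_one]

theorem ae_eq_comp_of_ae_ae_measure_Iic_eq [IsFiniteMeasure μ] {κ : Kernel α ℝ}
    [IsFiniteKernel κ] (h : ∀ᵐ y ∂(κ ∘ₘ μ), ∀ᵐ x ∂μ, κ x (Iic y) = (κ ∘ₘ μ) (Iic y)) :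
    ∀ᵐ x ∂μ, κ x = κ ∘ₘ μ := by
  rw [← Measure.compProd_eq_prod_iff]
  refine Measure.ext_prod fun {A B} hA hB => ?_
  have hA_comp : κ ∘ₘ μ.restrict A = μ A • κ ∘ₘ μ := by
    refine Measure.eq_of_ae_measure_Iic_eq
      (Measure.restrict_le_self.absolutelyContinuous.comp_right κ)
      Measure.smul_absolutelyContinuous ?_
    filter_upwards [h] with y hy
    rw [Measure.bind_apply measurableSet_Iic κ.aemeasurable,
      lintegral_congr_ae (ae_restrict_of_ae hy), setLIntegral_const, Measure.smul_apply,
      smul_eq_mul, mul_comm]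
  rw [Measure.compProd_apply_prod hA hB, Measure.prod_prod,
    ← Measure.bind_apply hB κ.aemeasurable, hA_comp, Measure.smul_apply, smul_eq_mul]

theorem ae_eq_comp_of_ae_ae_prod_measure_Iic_eq [IsProbabilityMeasure μ] {κ : Kernel α ℝ}
    [IsFiniteKernel κ] (h : ∀ᵐ y ∂(κ ∘ₘ μ), ∀ᵐ p ∂(μ.prod μ), κ p.1 (Iic y) = κ p.2 (Iic y)) :
    ∀ᵐ x ∂μ, κ x = κ ∘ₘ μ := by
  refine ae_eq_comp_of_ae_ae_measure_Iic_eq ?_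
  filter_upwards [h] with y hy
  rw [Measure.bind_apply measurableSet_Iic κ.aemeasurable]
  exact ae_eq_lintegral_of_ae_prod_eq hy

theorem integral_integral_map_sub_measure_Iic_eq_zero_iff [IsProbabilityMeasure μ]
    {κ : Kernel α ℝ} [IsMarkovKernel κ] {φ : ℝ → ℝ} (hφ : ConvexOn ℝ (Icc (-1) 1) φ)
    (hφ0 : φ 0 = 0) (hφstrict : ∀ ε : ℝ, 0 < ε → ε ≤ 1 → φ 0 < (φ (-ε) + φ ε) / 2) :
    ∫ p : α × α, ∫ y, φ ((κ p.1 (Iic y)).toReal - (κ p.2 (Iic y)).toReal) ∂(κ ∘ₘ μ)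
        ∂(μ.prod μ) = 0 ↔ ∀ᵐ x ∂μ, κ x = κ ∘ₘ μ := by
  constructor
  · intro h
    have hκm := Kernel.measurable_measure_Iic (κ := κ)
    have hpair := ae_ae_eq_of_integral_map_sub_eq_zero (F := fun x y => (κ x (Iic y)).toReal)
      hκm.ennreal_toReal (fun x y => ⟨ENNReal.toReal_nonneg, measureReal_le_one⟩) hφ hφ0
      hφstrict h
    have hpair' : ∀ᵐ p ∂(μ.prod μ), ∀ᵐ y ∂(κ ∘ₘ μ), κ p.1 (Iic y) = κ p.2 (Iic y) := by
      filter_upwards [hpair] with p hp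
      filter_upwards [hp] with y hy
      exact (ENNReal.toReal_eq_toReal_iff' (measure_ne_top _ _) (measure_ne_top _ _)).mp hy
    refine ae_eq_comp_of_ae_ae_prod_measure_Iic_eq ((Measure.ae_ae_comm ?_).mp hpair')
    exact measurableSet_eq_fun (hκm.comp (measurable_fst.fst.prodMk measurable_snd))
      (hκm.comp (measurable_fst.snd.prodMk measurable_snd))
  · intro h
    have h₁ := (Measure.quasiMeasurePreserving_fst (ν := μ)).ae h
    have h₂ := (Measure.quasiMeasurePreserving_snd (μ := μ)).ae h
    refine (integral_congr_ae ?_).trans (integral_zero _ ℝ)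
    filter_upwards [h₁, h₂] with p hp₁ hp₂
    simp [hp₁, hp₂, hφ0]

end Kernel

theorem stmt7_general {Ω : Type*} [MeasurableSpace Ω] (P : Measure Ω) [IsProbabilityMeasure P]
    (X Y : Ω → ℝ) (hX : Measurable X)
    (κ : Kernel ℝ ℝ) [IsMarkovKernel κ]
    (hκ : ∀ A B : Set ℝ, MeasurableSet A → MeasurableSet B →
      P.map (fun ω => (X ω, Y ω)) (A ×ˢ B) = ∫⁻ x in A, κ x B ∂(P.map X))
    (φ : ℝ → ℝ) (hφ : ConvexOn ℝ (Set.Icc (-1 : ℝ) 1) φ) (hφ0 : φ 0 = 0)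
    (hφstrict : ∀ ε : ℝ, 0 < ε → ε ≤ 1 → φ 0 < (φ (-ε) + φ ε) / 2) :
    ∫ x : ℝ × ℝ, (∫ y, φ ((κ x.1 (Set.Iic y)).toReal - (κ x.2 (Set.Iic y)).toReal)
            ∂(P.map Y)) ∂((P.map X).prod (P.map X)) = 0 ↔
      P.map (fun ω => (X ω, Y ω)) = (P.map X).prod (P.map Y) := by
  have : IsProbabilityMeasure (P.map X) := Measure.isProbabilityMeasure_map hX.aemeasurable
  have hjoint : P.map (fun ω => (X ω, Y ω)) = P.map X ⊗ₘ κ :=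
    Measure.ext_prod fun hA hB => by rw [hκ _ _ hA hB, Measure.compProd_apply_prod hA hB]
  have hY_law : P.map Y = κ ∘ₘ P.map X := by
    rw [← Measure.snd_map_prodMk hX, hjoint, Measure.snd_compProd]
  rw [hY_law, hjoint, Measure.compProd_eq_prod_iff]
  exact integral_integral_map_sub_measure_Iic_eq_zero_iff hφ hφ0 hφstrict

/-- For φ convex, strictly convex at 0, with φ(0)=0, the sensitivity
functional of conditional distribution functions vanishes iff X and Y are
independent, i.e. iff P^{(X,Y)} = P^X ⊗ P^Y. -/
theorem stmt7 {Ω : Type*} [MeasurableSpace Ω] (P : Measure Ω) [IsProbabilityMeasure P]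
    (X Y : Ω → ℝ) (hX : Measurable X) (hY : Measurable Y)
    (κ : Kernel ℝ ℝ) [IsMarkovKernel κ]
    (hκ : ∀ A B : Set ℝ, MeasurableSet A → MeasurableSet B →
      P.map (fun ω => (X ω, Y ω)) (A ×ˢ B) = ∫⁻ x in A, κ x B ∂(P.map X))
    (φ : ℝ → ℝ) (hφ : ConvexOn ℝ (Set.Icc (-1 : ℝ) 1) φ) (hφ0 : φ 0 = 0)
    (hφstrict : ∀ ε : ℝ, 0 < ε → ε ≤ 1 → φ 0 < (φ (-ε) + φ ε) / 2) :
    ∫ x : ℝ × ℝ, (∫ y, φ ((κ x.1 (Set.Iic y)).toReal - (κ x.2 (Set.Iic y)).toReal)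
            ∂(P.map Y)) ∂((P.map X).prod (P.map X)) = 0 ↔
      P.map (fun ω => (X ω, Y ω)) = (P.map X).prod (P.map Y) :=
  stmt7_general P X Y hX κ hκ φ hφ hφ0 hφstrict
end

section
/- Let (Ω, 𝒜, P) be a probability space, X, Y : Ω → ℝ random variables with Y non-degenerate, and φ : [−1,1] → ℝ convex and strictly convex at 0 with φ(0) = 0. If ∫_{ℝ×ℝ} ∫_ℝ φ(F_{Y|X=x₁}(y) − F_{Y|X=x₂}(y)) dP^Y(y) d(P^X ⊗ P^X)(x₁,x₂) = ∫_{ℝ×ℝ} ∫_ℝ φ(𝟙_{\{y₁ ≤ y\}} − 𝟙_{\{y₂ ≤ y\}}) dP^Y(y) d(P^Y ⊗ P^Y)(y₁,y₂), then Y is completely dependent on X, i.e., there exists a Borel measurable f : ℝ → ℝ with Y = f(X) P-almost surely. -/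
/-!
Write `F x y = κ x (Iic y)` for the conditional distribution function and `H y = P(Y ≤ y)`,
so that `∫ F x y dP^X = H y`. Convexity of `φ` with `φ 0 = 0` gives
`φ (u - v) ≤ u (1 - v) φ 1 + v (1 - u) φ (-1)` on `[0,1]²`, with a gap of at least
`min (u (1 - v)) (v (1 - u)) · (φ 1 + φ (-1))`, and `φ 1 + φ (-1) > 0` by strict convexity at `0`.
Integrated against `P^X ⊗ P^X ⊗ P^Y`, the bound equals `(φ 1 + φ (-1)) ∫ H (1 - H) dP^Y`, as it
only depends on the mean `H` of `F`; for the indicators `𝟙{y₁ ≤ y}` it is attained pointwise, so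
the hypothesis says that the integrated gap vanishes. Hence for `P^Y`-a.e. `y`, `F x y ∈ {0, 1}`
for `P^X`-a.e. `x`, and then `{Y ≤ y} = {F X y = 1}` almost surely. Along a countable set of such
`y` approximating `P^Y`-a.e. point from the right, `Y` is a.s. the infimum of the `y` with
`F X y = 1`, a measurable function of `X`.
-/

open MeasureTheory ProbabilityTheory Filter Set
open scoped ENNReal Topology

/-- `E φ(ξ - η)` for independent `ξ ~ Bernoulli u` and `η ~ Bernoulli v`, when `φ 0 = 0`. -/
def jensenBound (φ : ℝ → ℝ) (u v : ℝ) : ℝ := u * (1 - v) * φ 1 + v * (1 - u) * φ (-1)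

section ConvexOnIcc

variable {φ : ℝ → ℝ}

lemma ConvexOn.le_mul_apply_one (hφ : ConvexOn ℝ (Icc (-1) 1) φ) (hφ0 : φ 0 = 0)
    {t : ℝ} (ht : t ∈ Icc (0 : ℝ) 1) : φ t ≤ t * φ 1 := by
  have := hφ.2 (x := 1) (y := 0) (by norm_num) (by norm_num) ht.1 (sub_nonneg.2 ht.2)
    (add_sub_cancel t 1)
  simpa [hφ0] using this

lemma ConvexOn.le_mul_apply_neg_one (hφ : ConvexOn ℝ (Icc (-1) 1) φ) (hφ0 : φ 0 = 0)
    {t : ℝ} (ht : t ∈ Icc (0 : ℝ) 1) : φ (-t) ≤ t * φ (-1) := by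
  have := hφ.2 (x := -1) (y := 0) (by norm_num) (by norm_num) ht.1 (sub_nonneg.2 ht.2)
    (add_sub_cancel t 1)
  simpa [hφ0] using this

lemma ConvexOn.add_apply_neg_nonneg (hφ : ConvexOn ℝ (Icc (-1) 1) φ) (hφ0 : φ 0 = 0)
    {t : ℝ} (ht : t ∈ Icc (-1 : ℝ) 1) : 0 ≤ φ t + φ (-t) := by
  have hneg : -t ∈ Icc (-1 : ℝ) 1 := ⟨by linarith [ht.2], by linarith [ht.1]⟩
  have := hφ.2 ht hneg one_half_pos.le one_half_pos.le (add_halves 1)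
  rw [smul_neg, add_neg_cancel, smul_eq_mul, smul_eq_mul, hφ0] at this
  linarith

lemma ConvexOn.abs_le_max (hφ : ConvexOn ℝ (Icc (-1) 1) φ) (hφ0 : φ 0 = 0)
    {t : ℝ} (ht : t ∈ Icc (-1 : ℝ) 1) : |φ t| ≤ max (φ 1) (φ (-1)) := by
  have hneg : -t ∈ Icc (-1 : ℝ) 1 := ⟨by linarith [ht.2], by linarith [ht.1]⟩
  have hle : ∀ s ∈ Icc (-1 : ℝ) 1, φ s ≤ max (φ 1) (φ (-1)) := fun s hs =>
    hφ.le_on_segment (x := 1) (y := -1) (by norm_num) (by norm_num)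
      (by rwa [segment_symm, segment_eq_Icc (by norm_num)])
  rw [abs_le]
  constructor <;> linarith [hle t ht, hle (-t) hneg, hφ.add_apply_neg_nonneg hφ0 ht]

lemma ConvexOn.min_mul_le_jensenBound_sub (hφ : ConvexOn ℝ (Icc (-1) 1) φ) (hφ0 : φ 0 = 0)
    {u v : ℝ} (hu : u ∈ Icc (0 : ℝ) 1) (hv : v ∈ Icc (0 : ℝ) 1) :
    min (u * (1 - v)) (v * (1 - u)) * (φ 1 + φ (-1)) ≤ jensenBound φ u v - φ (u - v) := by
  obtain ⟨hu0, hu1⟩ := hu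
  obtain ⟨hv0, hv1⟩ := hv
  rcases le_total v u with h | h
  · have := hφ.le_mul_apply_one hφ0 ⟨sub_nonneg.2 h, by linarith⟩
    have hmin : min (u * (1 - v)) (v * (1 - u)) = v * (1 - u) := min_eq_right (by nlinarith)
    rw [hmin, jensenBound]
    nlinarith
  · have := hφ.le_mul_apply_neg_one hφ0 ⟨sub_nonneg.2 h, by linarith⟩
    have hmin : min (u * (1 - v)) (v * (1 - u)) = u * (1 - v) := min_eq_left (by nlinarith)
    rw [neg_sub] at this
    rw [hmin, jensenBound]
    nlinarith

lemma ConvexOn.apply_sub_le_jensenBound (hφ : ConvexOn ℝ (Icc (-1) 1) φ) (hφ0 : φ 0 = 0)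
    {u v : ℝ} (hu : u ∈ Icc (0 : ℝ) 1) (hv : v ∈ Icc (0 : ℝ) 1) :
    φ (u - v) ≤ jensenBound φ u v := by
  have hmin : 0 ≤ min (u * (1 - v)) (v * (1 - u)) :=
    le_min (mul_nonneg hu.1 (sub_nonneg.2 hv.2)) (mul_nonneg hv.1 (sub_nonneg.2 hu.2))
  have := mul_nonneg hmin (hφ.add_apply_neg_nonneg hφ0 (t := 1) (by norm_num))
  linarith [hφ.min_mul_le_jensenBound_sub hφ0 hu hv]

lemma abs_jensenBound_le {u v : ℝ} (hu : u ∈ Icc (0 : ℝ) 1) (hv : v ∈ Icc (0 : ℝ) 1) :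
    |jensenBound φ u v| ≤ |φ 1| + |φ (-1)| := by
  obtain ⟨hu0, hu1⟩ := hu
  obtain ⟨hv0, hv1⟩ := hv
  have h1 : |u * (1 - v)| ≤ 1 := by rw [abs_le]; constructor <;> nlinarith
  have h2 : |v * (1 - u)| ≤ 1 := by rw [abs_le]; constructor <;> nlinarith
  calc |jensenBound φ u v| ≤ |u * (1 - v)| * |φ 1| + |v * (1 - u)| * |φ (-1)| := by
        rw [jensenBound, ← abs_mul, ← abs_mul]; exact abs_add_le _ _
    _ ≤ |φ 1| + |φ (-1)| := by
        gcongr <;> nlinarith [abs_nonneg (φ 1), abs_nonneg (φ (-1))]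

lemma apply_ite_sub_ite_eq_jensenBound (hφ0 : φ 0 = 0) (p q : Prop) [Decidable p] [Decidable q] :
    φ ((if p then 1 else 0) - (if q then 1 else 0)) =
      jensenBound φ (if p then 1 else 0) (if q then 1 else 0) := by
  split_ifs <;> simp [jensenBound, hφ0]

end ConvexOnIcc

lemma ContinuousOn.measurable_comp_of_forall_mem_Icc {α : Type*} [MeasurableSpace α] {a b : ℝ}
    {φ : ℝ → ℝ} (hφ : ContinuousOn φ (Ioo a b)) {d : α → ℝ} (hd : Measurable d)
    (hdab : ∀ x, d x ∈ Icc a b) : Measurable fun x => φ (d x) := by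
  refine measurable_of_isOpen fun s hs => ?_
  have hpre : (fun x => φ (d x)) ⁻¹' s = d ⁻¹' (Ioo a b ∩ φ ⁻¹' s ∪ {a, b} ∩ φ ⁻¹' s) := by
    ext x
    rcases eq_endpoints_or_mem_Ioo_of_mem_Icc (hdab x) with h | h | h <;> simp [h]
  rw [hpre]
  exact hd ((hφ.isOpen_inter_preimage isOpen_Ioo hs).measurableSet.union
    ((toFinite _).subset inter_subset_left).measurableSet)

section JensenBoundIntegral

variable {α β : Type*} [MeasurableSpace α] [MeasurableSpace β]
  {μ : Measure α} {ν : Measure β} [IsFiniteMeasure ν] {F : α → β → ℝ}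

lemma integral_jensenBound [IsProbabilityMeasure μ] (φ : ℝ → ℝ)
    (hF : Measurable (Function.uncurry F))
    (hF01 : ∀ x y, F x y ∈ Icc (0 : ℝ) 1) :
    ∫ p : α × α, ∫ y, jensenBound φ (F p.1 y) (F p.2 y) ∂ν ∂(μ.prod μ) =
      (φ 1 + φ (-1)) * ∫ y, (∫ x, F x y ∂μ) * (1 - ∫ x, F x y ∂μ) ∂ν := by
  have hFy : ∀ y, Integrable (fun x => F x y) μ := fun y =>
    .of_bound hF.of_uncurry_right.aestronglyMeasurable 1 <| ae_of_all _ fun x =>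
      abs_le.2 ⟨by linarith [(hF01 x y).1], (hF01 x y).2⟩
  have hinner : ∀ y, ∫ p : α × α, jensenBound φ (F p.1 y) (F p.2 y) ∂(μ.prod μ) =
      (φ 1 + φ (-1)) * ((∫ x, F x y ∂μ) * (1 - ∫ x, F x y ∂μ)) := by
    intro y
    have h1 : Integrable (fun x => 1 - F x y) μ := (integrable_const 1).sub (hFy y)
    have hexpand : ∀ p : α × α, jensenBound φ (F p.1 y) (F p.2 y) =
        F p.1 y * (1 - F p.2 y) * φ 1 + (1 - F p.1 y) * F p.2 y * φ (-1) := fun p => by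
      unfold jensenBound; ring
    simp_rw [hexpand]
    rw [integral_add (((hFy y).mul_prod h1).mul_const _) ((h1.mul_prod (hFy y)).mul_const _),
      integral_mul_const, integral_mul_const,
      integral_prod_mul (fun x => F x y) (fun x => 1 - F x y),
      integral_prod_mul (fun x => 1 - F x y) (fun x => F x y),
      integral_sub (integrable_const 1) (hFy y)]
    simp only [integral_const, probReal_univ, smul_eq_mul, mul_one]
    ring
  have hint : Integrable (Function.uncurry fun (p : α × α) (y : β) =>
      jensenBound φ (F p.1 y) (F p.2 y)) ((μ.prod μ).prod ν) := by
    refine .of_bound ?_ _ <| ae_of_all _ fun q => abs_jensenBound_le (hF01 _ _) (hF01 _ _)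
    unfold jensenBound
    fun_prop
  rw [integral_integral_swap hint]
  simp_rw [hinner]
  exact integral_const_mul _ _

lemma ae_ae_apply_sub_eq_jensenBound_of_integral_eq [IsFiniteMeasure μ] {φ : ℝ → ℝ}
    (hφ : ConvexOn ℝ (Icc (-1) 1) φ) (hφ0 : φ 0 = 0) (hF : Measurable (Function.uncurry F))
    (hF01 : ∀ x y, F x y ∈ Icc (0 : ℝ) 1)
    (h : ∫ p : α × α, ∫ y, φ (F p.1 y - F p.2 y) ∂ν ∂(μ.prod μ) =
      ∫ p : α × α, ∫ y, jensenBound φ (F p.1 y) (F p.2 y) ∂ν ∂(μ.prod μ)) :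
    ∀ᵐ y ∂ν, ∀ᵐ p ∂(μ.prod μ), φ (F p.1 y - F p.2 y) = jensenBound φ (F p.1 y) (F p.2 y) := by
  have hdiff : ∀ q : (α × α) × β, F q.1.1 q.2 - F q.1.2 q.2 ∈ Icc (-1 : ℝ) 1 := fun q =>
    ⟨by linarith [(hF01 q.1.1 q.2).1, (hF01 q.1.2 q.2).2],
      by linarith [(hF01 q.1.1 q.2).2, (hF01 q.1.2 q.2).1]⟩
  have hφm : Measurable fun q : (α × α) × β => φ (F q.1.1 q.2 - F q.1.2 q.2) := by
    refine (interior_Icc (a := (-1 : ℝ)) (b := 1) ▸ hφ.continuousOn_interior)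
      |>.measurable_comp_of_forall_mem_Icc ?_ hdiff
    fun_prop
  have hJm : Measurable fun q : (α × α) × β => jensenBound φ (F q.1.1 q.2) (F q.1.2 q.2) := by
    unfold jensenBound
    fun_prop
  have hφi : Integrable (fun q : (α × α) × β => φ (F q.1.1 q.2 - F q.1.2 q.2))
      ((μ.prod μ).prod ν) :=
    .of_bound hφm.aestronglyMeasurable _ <| ae_of_all _ fun q => hφ.abs_le_max hφ0 (hdiff q)
  have hJi : Integrable (fun q : (α × α) × β => jensenBound φ (F q.1.1 q.2) (F q.1.2 q.2))
      ((μ.prod μ).prod ν) :=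
    .of_bound hJm.aestronglyMeasurable _ <| ae_of_all _ fun q =>
      abs_jensenBound_le (hF01 _ _) (hF01 _ _)
  set gap : (α × α) × β → ℝ := fun q =>
    jensenBound φ (F q.1.1 q.2) (F q.1.2 q.2) - φ (F q.1.1 q.2 - F q.1.2 q.2)
  have hgap_nonneg : 0 ≤ gap := fun q =>
    sub_nonneg.2 <| hφ.apply_sub_le_jensenBound hφ0 (hF01 _ _) (hF01 _ _)
  have hgap_zero : ∫ q, gap q ∂((μ.prod μ).prod ν) = 0 := by
    rw [integral_sub hJi hφi, sub_eq_zero]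
    calc _ = ∫ p : α × α, ∫ y, jensenBound φ (F p.1 y) (F p.2 y) ∂ν ∂(μ.prod μ) :=
          (integral_integral (f := fun (p : α × α) y => jensenBound φ (F p.1 y) (F p.2 y)) hJi).symm
      _ = _ := h.symm
      _ = _ := integral_integral (f := fun (p : α × α) y => φ (F p.1 y - F p.2 y)) hφi
  have hae : ∀ᵐ q ∂((μ.prod μ).prod ν), gap q = 0 :=
    (integral_eq_zero_iff_of_nonneg hgap_nonneg (hJi.sub hφi)).1 hgap_zero
  have hae' : ∀ᵐ p ∂(μ.prod μ), ∀ᵐ y ∂ν,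
      φ (F p.1 y - F p.2 y) = jensenBound φ (F p.1 y) (F p.2 y) :=
    Measure.ae_ae_of_ae_prod (p := fun q : (α × α) × β =>
      φ (F q.1.1 q.2 - F q.1.2 q.2) = jensenBound φ (F q.1.1 q.2) (F q.1.2 q.2))
      (hae.mono fun q hq => (sub_eq_zero.1 hq).symm)
  exact (Measure.ae_ae_comm
    (p := fun (p : α × α) y => φ (F p.1 y - F p.2 y) = jensenBound φ (F p.1 y) (F p.2 y))
    (measurableSet_eq_fun hφm hJm)).1 hae'

end JensenBoundIntegral

lemma ConvexOn.ae_eq_zero_or_one_of_ae_apply_sub_eq_jensenBound {γ : Type*} [MeasurableSpace γ]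
    {m : Measure γ} [SFinite m] {φ : ℝ → ℝ} (hφ : ConvexOn ℝ (Icc (-1) 1) φ) (hφ0 : φ 0 = 0)
    (hφ1 : 0 < φ 1 + φ (-1)) {G : γ → ℝ} (hG01 : ∀ x, G x ∈ Icc (0 : ℝ) 1)
    (h : ∀ᵐ p ∂(m.prod m), φ (G p.1 - G p.2) = jensenBound φ (G p.1) (G p.2)) :
    ∀ᵐ x ∂m, G x = 0 ∨ G x = 1 := by
  set S := {x | G x ∈ Ioo (0 : ℝ) 1}
  have hS : (m.prod m) (S ×ˢ S) = 0 := by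
    refine measure_mono_null (fun p ⟨⟨h1, h1'⟩, ⟨h2, h2'⟩⟩ => ?_) (ae_iff.1 h)
    have hmin : 0 < min (G p.1 * (1 - G p.2)) (G p.2 * (1 - G p.1)) :=
      lt_min (mul_pos h1 (by linarith)) (mul_pos h2 (by linarith))
    have := hφ.min_mul_le_jensenBound_sub hφ0 (hG01 p.1) (hG01 p.2)
    intro hp
    rw [hp, sub_self] at this
    linarith [mul_pos hmin hφ1]
  rw [Measure.prod_prod, mul_self_eq_zero] at hS
  filter_upwards [measure_eq_zero_iff_ae_notMem.1 hS] with x hx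
  rcases eq_endpoints_or_mem_Ioo_of_mem_Icc (hG01 x) with h | h | h
  exacts [Or.inl h, Or.inr h, absurd h hx]

lemma ProbabilityTheory.Kernel.measurable_toReal_Iic {α : Type*} [MeasurableSpace α]
    (κ : Kernel α ℝ) [IsSFiniteKernel κ] :
    Measurable fun p : α × ℝ => (κ p.1 (Iic p.2)).toReal :=
  (Kernel.measurable_kernel_prodMk_left (κ := Kernel.prodMkRight ℝ κ)
    (measurableSet_le measurable_snd measurable_fst.snd)).ennreal_toReal

lemma integral_apply_ite_le_sub_ite_le {ν : Measure ℝ} [IsProbabilityMeasure ν] {φ : ℝ → ℝ}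
    (hφ0 : φ 0 = 0) :
    ∫ p : ℝ × ℝ, ∫ y, φ ((if p.1 ≤ y then 1 else 0) - (if p.2 ≤ y then 1 else 0)) ∂ν ∂(ν.prod ν) =
      (φ 1 + φ (-1)) * ∫ y, ν.real (Iic y) * (1 - ν.real (Iic y)) ∂ν := by
  have hind : Measurable (Function.uncurry fun z y : ℝ => if z ≤ y then (1 : ℝ) else 0) :=
    Measurable.ite (measurableSet_le measurable_fst measurable_snd) measurable_const
      measurable_const
  have hind01 : ∀ z y : ℝ, (if z ≤ y then (1 : ℝ) else 0) ∈ Icc (0 : ℝ) 1 := fun z y => by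
    split_ifs <;> norm_num
  have hmean : ∀ y, ∫ z, (if z ≤ y then (1 : ℝ) else 0) ∂ν = ν.real (Iic y) := fun y => by
    rw [← integral_indicator_one measurableSet_Iic]
    rfl
  simp_rw [apply_ite_sub_ite_eq_jensenBound hφ0]
  rw [integral_jensenBound φ hind hind01]
  simp_rw [hmean]

lemma exists_measurable_comp_ae_eq_of_ae_le_iff {Ω α : Type*} [MeasurableSpace Ω]
    [MeasurableSpace α] {P : Measure Ω} {X : Ω → α} {Y : Ω → ℝ} {D : Set ℝ} (hD : D.Countable)
    {A : ℝ → Set α} (hA : ∀ q ∈ D, MeasurableSet (A q))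
    (hYA : ∀ q ∈ D, ∀ᵐ ω ∂P, (Y ω ≤ q ↔ X ω ∈ A q))
    (hYD : ∀ᵐ ω ∂P, ∀ z > Y ω, ∃ q ∈ D, q ∈ Ico (Y ω) z) :
    ∃ f : α → ℝ, Measurable f ∧ ∀ᵐ ω ∂P, Y ω = f (X ω) := by
  classical
  have := hD.to_subtype
  set g : α → EReal := fun x => ⨅ q : D, if x ∈ A q then ((q : ℝ) : EReal) else ⊤
  have hg : Measurable g :=
    Measurable.iInf fun q => Measurable.ite (hA q q.2) measurable_const measurable_const
  refine ⟨fun x => (g x).toReal, hg.ereal_toReal, ?_⟩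
  filter_upwards [(ae_all_iff.2 fun q : D => hYA q q.2), hYD] with ω hYA hYD
  suffices g (X ω) = Y ω by rw [this, EReal.toReal_coe]
  apply le_antisymm
  · refine EReal.le_of_forall_lt_iff_le.1 fun z hz => ?_
    obtain ⟨q, hqD, hYq, hqz⟩ := hYD z (EReal.coe_lt_coe_iff.1 hz)
    refine (iInf_le _ ⟨q, hqD⟩).trans ?_
    rw [if_pos ((hYA ⟨q, hqD⟩).1 hYq)]
    exact EReal.coe_le_coe_iff.2 hqz.le
  · refine le_iInf fun q => ?_
    split_ifs with hq
    · exact EReal.coe_le_coe_iff.2 ((hYA q).2 hq)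
    · exact le_top

lemma Set.exists_countable_subset_forall_exists_mem_Ico (s : Set ℝ) :
    ∃ D ⊆ s, D.Countable ∧ ∀ c ∈ s, ∀ z > c, ∃ q ∈ D, q ∈ Ico c z := by
  obtain ⟨D, hDs, hD, hsD⟩ := (TopologicalSpace.IsSeparable.of_separableSpace s)
    |>.exists_countable_dense_subset
  refine ⟨D ∪ {c ∈ s | 𝓝[s ∩ Ioi c] c = ⊥}, union_subset hDs (sep_subset _ _),
    hD.union countable_setOfPred_isolated_right_within, fun c hc z hz => ?_⟩
  by_cases hiso : 𝓝[s ∩ Ioi c] c = ⊥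
  · exact ⟨c, Or.inr ⟨hc, hiso⟩, le_rfl, hz⟩
  obtain ⟨t, ⟨hts, hct⟩, htz⟩ : (s ∩ Ioi c ∩ Iio z).Nonempty :=
    (⟨hiso⟩ : NeBot _).nonempty_of_mem
      (inter_mem self_mem_nhdsWithin (mem_nhdsWithin_of_mem_nhds (Iio_mem_nhds hz)))
  obtain ⟨q, ⟨hcq, hqz⟩, hqD⟩ := mem_closure_iff.1 (hsD hts) (Ioo c z) isOpen_Ioo ⟨hct, htz⟩
  exact ⟨q, Or.inl hqD, hcq.le, hqz⟩

section Disintegration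

variable {Ω α β : Type*} [MeasurableSpace Ω] [MeasurableSpace α] [MeasurableSpace β]
  {P : Measure Ω} {X : Ω → α} {Y : Ω → β} {κ : Kernel α β} [IsMarkovKernel κ]

lemma integral_toReal_kernel_eq_measureReal_map (hX : Measurable X)
    (hκ : ∀ A B, MeasurableSet A → MeasurableSet B →
      P.map (fun ω => (X ω, Y ω)) (A ×ˢ B) = ∫⁻ x in A, κ x B ∂(P.map X))
    {B : Set β} (hB : MeasurableSet B) :
    ∫ x, (κ x B).toReal ∂(P.map X) = (P.map Y).real B := by
  have hlaw := hκ univ B MeasurableSet.univ hB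
  rw [Measure.restrict_univ, univ_prod, ← Measure.snd_apply hB, Measure.snd_map_prodMk hX] at hlaw
  rw [integral_toReal (κ.measurable_coe hB).aemeasurable (ae_of_all _ fun x => measure_lt_top _ _),
    ← hlaw, measureReal_def]

lemma ae_mem_iff_of_ae_eq_zero_or_one (hX : Measurable X) (hY : Measurable Y)
    (hκ : ∀ A B, MeasurableSet A → MeasurableSet B →
      P.map (fun ω => (X ω, Y ω)) (A ×ˢ B) = ∫⁻ x in A, κ x B ∂(P.map X))
    {B : Set β} (hB : MeasurableSet B) (h01 : ∀ᵐ x ∂(P.map X), κ x B = 0 ∨ κ x B = 1) :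
    ∀ᵐ ω ∂P, (Y ω ∈ B ↔ κ (X ω) B = 1) := by
  set A := {x | κ x B = 1}
  have hA : MeasurableSet A := Kernel.measurable_coe κ hB (measurableSet_singleton 1)
  have hnull : P.map (fun ω => (X ω, Y ω)) (Aᶜ ×ˢ B ∪ A ×ˢ Bᶜ) = 0 := by
    refine measure_union_null ?_ ?_
    · rw [hκ _ _ hA.compl hB, setLIntegral_congr_fun_ae hA.compl (g := fun _ => 0) ?_,
        lintegral_zero]
      filter_upwards [h01] with x hx hxA
      exact hx.resolve_right hxA
    · rw [hκ _ _ hA hB.compl, setLIntegral_congr_fun_ae hA (g := fun _ => 0) ?_, lintegral_zero]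
      refine Eventually.of_forall fun x (hxA : κ x B = 1) => ?_
      rw [prob_compl_eq_zero_iff hB]
      exact hxA
  filter_upwards [ae_of_ae_map (hX.prodMk hY).aemeasurable
    (measure_eq_zero_iff_ae_notMem.1 hnull)] with ω hω
  by_cases hYB : Y ω ∈ B <;> by_cases hXA : X ω ∈ A <;> simp_all [A]

lemma exists_measurable_comp_ae_eq_of_ae_ae_eq_zero_or_one {Y : Ω → ℝ} {κ : Kernel α ℝ}
    [IsMarkovKernel κ] (hX : Measurable X) (hY : Measurable Y)
    (hκ : ∀ A B, MeasurableSet A → MeasurableSet B →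
      P.map (fun ω => (X ω, Y ω)) (A ×ˢ B) = ∫⁻ x in A, κ x B ∂(P.map X))
    (h01 : ∀ᵐ y ∂(P.map Y), ∀ᵐ x ∂(P.map X), κ x (Iic y) = 0 ∨ κ x (Iic y) = 1) :
    ∃ f : α → ℝ, Measurable f ∧ ∀ᵐ ω ∂P, Y ω = f (X ω) := by
  obtain ⟨D, hDs, hD, hDdense⟩ := exists_countable_subset_forall_exists_mem_Ico
    {y | ∀ᵐ x ∂(P.map X), κ x (Iic y) = 0 ∨ κ x (Iic y) = 1}
  refine exists_measurable_comp_ae_eq_of_ae_le_iff hD (A := fun q => {x | κ x (Iic q) = 1})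
    (fun q _ => κ.measurable_coe measurableSet_Iic (measurableSet_singleton 1))
    (fun q hq => ae_mem_iff_of_ae_eq_zero_or_one hX hY hκ measurableSet_Iic (hDs hq)) ?_
  filter_upwards [ae_of_ae_map hY.aemeasurable h01] with ω hω z hz using hDdense _ hω z hz

end Disintegration

theorem stmt8_general {Ω : Type*} [MeasurableSpace Ω] (P : Measure Ω) [IsProbabilityMeasure P]
    (X Y : Ω → ℝ) (hX : Measurable X) (hY : Measurable Y)
    (κ : Kernel ℝ ℝ) [IsMarkovKernel κ]
    (hκ : ∀ A B : Set ℝ, MeasurableSet A → MeasurableSet B →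
      P.map (fun ω => (X ω, Y ω)) (A ×ˢ B) = ∫⁻ x in A, κ x B ∂(P.map X))
    (φ : ℝ → ℝ) (hφ : ConvexOn ℝ (Set.Icc (-1 : ℝ) 1) φ) (hφ0 : φ 0 = 0)
    (hφstrict : ∀ ε : ℝ, 0 < ε → ε ≤ 1 → φ 0 < (φ (-ε) + φ ε) / 2)
    (heq : ∫ x : ℝ × ℝ, (∫ y, φ ((κ x.1 (Set.Iic y)).toReal - (κ x.2 (Set.Iic y)).toReal)
              ∂(P.map Y)) ∂((P.map X).prod (P.map X)) =
        ∫ p : ℝ × ℝ, (∫ y, φ ((if p.1 ≤ y then (1 : ℝ) else 0) - (if p.2 ≤ y then (1 : ℝ) else 0))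
              ∂(P.map Y)) ∂((P.map Y).prod (P.map Y))) :
    ∃ f : ℝ → ℝ, Measurable f ∧ ∀ᵐ ω ∂P, Y ω = f (X ω) := by
  have := Measure.isProbabilityMeasure_map (μ := P) hX.aemeasurable
  have := Measure.isProbabilityMeasure_map (μ := P) hY.aemeasurable
  have hφ1 : 0 < φ 1 + φ (-1) := by linarith [hφstrict 1 one_pos le_rfl]
  have hF01 : ∀ x y, (κ x (Iic y)).toReal ∈ Icc (0 : ℝ) 1 := fun x y =>
    ⟨ENNReal.toReal_nonneg, measureReal_le_one⟩
  have hjensen := ae_ae_apply_sub_eq_jensenBound_of_integral_eq hφ hφ0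
    κ.measurable_toReal_Iic hF01 <| by
      rw [heq, integral_apply_ite_le_sub_ite_le hφ0,
        integral_jensenBound φ κ.measurable_toReal_Iic hF01]
      simp_rw [integral_toReal_kernel_eq_measureReal_map hX hκ measurableSet_Iic]
  refine exists_measurable_comp_ae_eq_of_ae_ae_eq_zero_or_one hX hY hκ ?_
  filter_upwards [hjensen] with y hy
  filter_upwards [hφ.ae_eq_zero_or_one_of_ae_apply_sub_eq_jensenBound hφ0 hφ1 (hF01 · y) hy]
    with x hx
  simpa [ENNReal.toReal_eq_zero_iff, ENNReal.toReal_eq_one_iff] using hx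

/-- If the sensitivity functional of conditional distribution
functions attains its maximal value (the normalizing integral), then Y is
completely dependent on X. -/
theorem stmt8 {Ω : Type*} [MeasurableSpace Ω] (P : Measure Ω) [IsProbabilityMeasure P]
    (X Y : Ω → ℝ) (hX : Measurable X) (hY : Measurable Y)
    (hYnondeg : ∀ c : ℝ, P.map Y ≠ Measure.dirac c)
    (κ : Kernel ℝ ℝ) [IsMarkovKernel κ]
    (hκ : ∀ A B : Set ℝ, MeasurableSet A → MeasurableSet B →
      P.map (fun ω => (X ω, Y ω)) (A ×ˢ B) = ∫⁻ x in A, κ x B ∂(P.map X))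
    (φ : ℝ → ℝ) (hφ : ConvexOn ℝ (Set.Icc (-1 : ℝ) 1) φ) (hφ0 : φ 0 = 0)
    (hφstrict : ∀ ε : ℝ, 0 < ε → ε ≤ 1 → φ 0 < (φ (-ε) + φ ε) / 2)
    (heq : ∫ x : ℝ × ℝ, (∫ y, φ ((κ x.1 (Set.Iic y)).toReal - (κ x.2 (Set.Iic y)).toReal)
              ∂(P.map Y)) ∂((P.map X).prod (P.map X)) =
        ∫ p : ℝ × ℝ, (∫ y, φ ((if p.1 ≤ y then (1 : ℝ) else 0) - (if p.2 ≤ y then (1 : ℝ) else 0))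
              ∂(P.map Y)) ∂((P.map Y).prod (P.map Y))) :
    ∃ f : ℝ → ℝ, Measurable f ∧ ∀ᵐ ω ∂P, Y ω = f (X ω) :=
  stmt8_general P X Y hX hY κ hκ φ hφ hφ0 hφstrict heq
end

section
/- Let (Ω, 𝒜, P) be a probability space, X, Y : Ω → ℝ random variables, h : ℝ → ℝ Borel measurable, and φ : [−1,1] → ℝ convex. Then ∫_{ℝ×ℝ} ∫_ℝ φ(F_{Y|h(X)=z₁}(y) − F_{Y|h(X)=z₂}(y)) dP^Y(y) d(P^{h(X)} ⊗ P^{h(X)})(z₁,z₂) ≤ ∫_{ℝ×ℝ} ∫_ℝ φ(F_{Y|X=x₁}(y) − F_{Y|X=x₂}(y)) dP^Y(y) d(P^X ⊗ P^X)(x₁,x₂). -/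
/-!
Let `ν` be the conditional law of `X` given `h(X)`. Since `h(X)` is a function of `X`, the
conditional law of `Y` given `h(X)` is `κ ∘ ν` almost everywhere, so
`F_{Y|h(X)=z}(y) = ∫ F_{Y|X=x}(y) dν_z(x)`. Hence for every pair `(z₁, z₂)` the difference
`F_{Y|h(X)=z₁}(y) - F_{Y|h(X)=z₂}(y)` is the mean of `F_{Y|X=x₁}(y) - F_{Y|X=x₂}(y)` under
`ν_{z₁} ⊗ ν_{z₂}`, and Jensen's inequality bounds `φ` of it by the mean of `φ`. Integrating over
`y` and then over `(z₁, z₂)`, the mixture of `ν_{z₁} ⊗ ν_{z₂}` under `P^{h(X)} ⊗ P^{h(X)}` is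
`P^X ⊗ P^X`, which is the right-hand side.
-/

open MeasureTheory ProbabilityTheory Set

namespace ConvexOn

variable {S : Set ℝ} {f : ℝ → ℝ} {x y a b : ℝ}

theorem add_rightDeriv_mul_sub_le (hf : ConvexOn ℝ S f) (hx : x ∈ interior S) (hy : y ∈ S) :
    f x + derivWithin f (Ioi x) x * (y - x) ≤ f y := by
  rcases lt_trichotomy y x with hyx | rfl | hxy
  · have hslope : slope f y x ≤ derivWithin f (Ioi x) x :=
      (hf.slope_le_leftDeriv_of_mem_interior hy hx hyx).trans
        (hf.leftDeriv_le_rightDeriv_of_mem_interior hx)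
    rw [slope_def_field, div_le_iff₀ (sub_pos.2 hyx)] at hslope
    nlinarith
  · simp
  · have hslope := hf.rightDeriv_le_slope_of_mem_interior hx hy hxy
    rw [slope_def_field, le_div_iff₀ (sub_pos.2 hxy)] at hslope
    linarith

theorem exists_abs_le_of_Icc (hf : ConvexOn ℝ (Icc a b) f) :
    ∃ C, ∀ t ∈ Icc a b, |f t| ≤ C := by
  rcases lt_or_ge a b with hab | hba
  · have hm : (a + b) / 2 ∈ interior (Icc a b) := by
      rw [interior_Icc]; constructor <;> linarith
    set m := (a + b) / 2 with hm_def
    set c := derivWithin f (Ioi m) m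
    refine ⟨max (max (f a) (f b)) (|c| * (b - a) - f m), fun t ht => abs_le.2 ⟨?_, ?_⟩⟩
    · have hline := hf.add_rightDeriv_mul_sub_le hm ht
      have hdist : |t - m| ≤ b - a :=
        abs_le.2 ⟨by linarith [ht.1, hm_def], by linarith [ht.2, hm_def]⟩
      have : -(c * (t - m)) ≤ |c| * (b - a) := by
        calc -(c * (t - m)) ≤ |c * (t - m)| := neg_le_abs _
          _ = |c| * |t - m| := abs_mul _ _
          _ ≤ |c| * (b - a) := by gcongr
      linarith [le_max_right (max (f a) (f b)) (|c| * (b - a) - f m)]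
    · exact (hf.le_max_of_mem_Icc (left_mem_Icc.2 hab.le) (right_mem_Icc.2 hab.le) ht).trans
        (le_max_left _ _)
  · refine ⟨|f a|, fun t ht => ?_⟩
    rw [show t = a by linarith [ht.1, ht.2]]

theorem exists_measurable_eqOn_Icc (hf : ConvexOn ℝ (Icc a b) f) :
    ∃ g : ℝ → ℝ, Measurable g ∧ EqOn g f (Icc a b) := by
  classical
  refine ⟨(Ioo a b).piecewise f (fun t => if t ≤ a then f a else f b), ?_, fun t ht => ?_⟩
  · refine measurable_of_restrict_of_restrict_compl (s := Ioo a b) measurableSet_Ioo ?_ ?_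
    · rw [domRestrict_piecewise, ← interior_Icc]
      exact hf.continuousOn_interior.domRestrict.measurable
    · rw [domRestrict_piecewise_compl]
      exact (Measurable.ite measurableSet_Iic measurable_const measurable_const).comp
        measurable_subtype_coe
  · by_cases hto : t ∈ Ioo a b
    · exact piecewise_eq_of_mem _ _ _ hto
    · rw [piecewise_eq_of_notMem _ _ _ hto]
      rw [mem_Ioo, not_and_or, not_lt, not_lt] at hto
      split_ifs with hta
      · rw [le_antisymm hta ht.1]
      · rw [le_antisymm ht.2 (hto.resolve_left hta)]

/-- Unlike `ConvexOn.map_integral_le`, no continuity is assumed: a convex function on `Icc a b`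
may jump up at the endpoints, but a mean at an endpoint forces `g` to be a.e. constant. -/
theorem map_integral_le_of_Icc {α : Type*} [MeasurableSpace α] {μ : Measure α}
    [IsProbabilityMeasure μ] {g : α → ℝ} (hf : ConvexOn ℝ (Icc a b) f)
    (hg : ∀ᵐ x ∂μ, g x ∈ Icc a b) (hgi : Integrable g μ) (hfg : Integrable (f ∘ g) μ) :
    f (∫ x, g x ∂μ) ≤ ∫ x, f (g x) ∂μ := by
  by_cases hint : ∫ x, g x ∂μ ∈ interior (Icc a b)
  · set m := ∫ x, g x ∂μ
    set c := derivWithin f (Ioi m) m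
    have hline : Integrable (fun x => c * (g x - m)) μ :=
      (hgi.sub (integrable_const m)).const_mul c
    calc f m = ∫ x, (f m + c * (g x - m)) ∂μ := by
          rw [integral_add (integrable_const _) hline, integral_const_mul,
            integral_sub hgi (integrable_const m)]
          simp [m]
      _ ≤ ∫ x, f (g x) ∂μ := integral_mono_ae ((integrable_const _).add hline) hfg
          (hg.mono fun x hx => hf.add_rightDeriv_mul_sub_le hint hx)
  · have hconst : g =ᵐ[μ] fun _ => ∫ x, g x ∂μ := by
      rw [interior_Icc, mem_Ioo, not_and_or, not_lt, not_lt] at hint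
      rcases hint with hle | hge
      · have hlow : ∀ᵐ x ∂μ, ∫ x, g x ∂μ ≤ g x := hg.mono fun x hx => hle.trans hx.1
        exact ((integral_eq_iff_of_ae_le (integrable_const _) hgi hlow).1 (by simp)).symm
      · have hup : ∀ᵐ x ∂μ, g x ≤ ∫ x, g x ∂μ := hg.mono fun x hx => hx.2.trans hge
        exact (integral_eq_iff_of_ae_le hgi (integrable_const _) hup).1 (by simp)
    rw [integral_congr_ae (hconst.mono fun x hx => congrArg f hx)]
    simp

end ConvexOn

theorem ProbabilityTheory.Kernel.deterministic_prodMap_id {α β γ : Type*} [MeasurableSpace α]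
    [MeasurableSpace β] [MeasurableSpace γ] {f : α → β} (hf : Measurable f) :
    deterministic (Prod.map f id) (hf.prodMap measurable_id)
      = deterministic f hf ∥ₖ (Kernel.id : Kernel γ γ) := by
  rw [Kernel.id, deterministic_parallelComp_deterministic]

namespace MeasureTheory.Measure

variable {α β γ δ : Type*} [MeasurableSpace α] [MeasurableSpace β] [MeasurableSpace γ]
  [MeasurableSpace δ]

theorem parallelComp_comp_prod (μ : Measure α) [SFinite μ] (ν : Measure γ) [SFinite ν]
    (κ : Kernel α β) [IsSFiniteKernel κ] (η : Kernel γ δ) [IsSFiniteKernel η] :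
    (κ ∥ₖ η) ∘ₘ (μ.prod ν) = (κ ∘ₘ μ).prod (η ∘ₘ ν) := by
  rw [prod_comp_left, prod_comp_right, comp_assoc, Kernel.parallelComp_comp_parallelComp,
    Kernel.comp_id, Kernel.id_comp]

theorem integral_comp {μ : Measure α} {κ : Kernel α β} {f : β → ℝ}
    (hf : Integrable f (κ ∘ₘ μ)) :
    ∫ y, f y ∂(κ ∘ₘ μ) = ∫ x, ∫ y, f y ∂κ x ∂μ := by
  rw [comp_eq_comp_const_apply] at hf ⊢
  rw [Kernel.integral_comp hf]
  simp

theorem map_prodMap_id_compProd (μ : Measure α) [SFinite μ] (κ : Kernel α γ) {f : α → β}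
    (hf : Measurable f) :
    (μ ⊗ₘ κ).map (Prod.map f id) = (Kernel.id ∥ₖ κ) ∘ₘ μ.map (fun x => (f x, x)) := by
  have hgraph : μ.map (fun x => (f x, x)) =
      (Kernel.deterministic f hf ∥ₖ Kernel.id) ∘ₘ (Kernel.copy α ∘ₘ μ) := by
    rw [← Kernel.deterministic_prodMap_id, deterministic_comp_eq_map, Kernel.copy,
      deterministic_comp_eq_map, map_map (hf.prodMap measurable_id) measurable_diag]
    rfl
  rw [compProd_eq_parallelComp_comp_copy_comp,
    ← deterministic_comp_eq_map (hf.prodMap measurable_id), Kernel.deterministic_prodMap_id,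
    comp_assoc, ← Kernel.parallelComp_comm, ← comp_assoc, hgraph]

end MeasureTheory.Measure

namespace ProbabilityTheory

theorem map_prodMk_comp_eq_compProd_comp_condDistrib {Ω α β γ : Type*} [MeasurableSpace Ω]
    [MeasurableSpace α] [StandardBorelSpace α] [Nonempty α] [MeasurableSpace β]
    [MeasurableSpace γ] {P : Measure Ω} [IsFiniteMeasure P] {X : Ω → α} {Y : Ω → γ}
    (hX : Measurable X) (hY : Measurable Y) {f : α → β} (hf : Measurable f)
    {κ : Kernel α γ} [IsSFiniteKernel κ] (hκ : P.map (fun ω => (X ω, Y ω)) = P.map X ⊗ₘ κ) :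
    P.map (fun ω => (f (X ω), Y ω)) = P.map (f ∘ X) ⊗ₘ (κ ∘ₖ condDistrib X (f ∘ X) P) := by
  rw [← Measure.parallelComp_comp_compProd, compProd_map_condDistrib hX.aemeasurable]
  calc P.map (fun ω => (f (X ω), Y ω))
      = (P.map fun ω => (X ω, Y ω)).map (Prod.map f id) := by
        rw [Measure.map_map (hf.prodMap measurable_id) (hX.prodMk hY)]; rfl
    _ = (Kernel.id ∥ₖ κ) ∘ₘ (P.map X).map (fun x => (f x, x)) := by
        rw [hκ, Measure.map_prodMap_id_compProd _ _ hf]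
    _ = (Kernel.id ∥ₖ κ) ∘ₘ P.map (fun ω => ((f ∘ X) ω, X ω)) := by
        rw [Measure.map_map (by fun_prop) hX]; rfl

namespace Kernel

variable {α β γ : Type*} [MeasurableSpace α] [MeasurableSpace β] [MeasurableSpace γ]

theorem measurable_real_Iic (κ : Kernel α ℝ) [IsSFiniteKernel κ] :
    Measurable fun p : α × ℝ => (κ p.1 (Iic p.2)).toReal :=
  (measurable_kernel_prodMk_left (κ := κ.comap Prod.fst measurable_fst)
    (measurableSet_le measurable_snd measurable_fst.snd)).ennreal_toReal

theorem comp_real_apply (κ : Kernel α γ) [IsFiniteKernel κ] (ν : Kernel β α) (z : β)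
    {s : Set γ} (hs : MeasurableSet s) :
    ((κ ∘ₖ ν) z s).toReal = ∫ x, (κ x s).toReal ∂ν z := by
  rw [comp_apply' _ _ _ hs, integral_toReal (κ.measurable_coe hs).aemeasurable
    (ae_of_all _ fun x => measure_lt_top _ _)]

noncomputable def cdfGap (κ : Kernel α ℝ) (x : α × α) (y : ℝ) : ℝ :=
  (κ x.1 (Iic y)).toReal - (κ x.2 (Iic y)).toReal

/-- For `κ` a conditional distribution of `Y` given `W`, `μ` the law of `W` and `m` the law of
`Y`, this is either side of the main inequality. -/
noncomputable def sensitivity (κ : Kernel α ℝ) (μ : Measure α) (m : Measure ℝ) (φ : ℝ → ℝ) :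
    ℝ :=
  ∫ x, ∫ y, φ (κ.cdfGap x y) ∂m ∂(μ.prod μ)

variable {μ : Measure α} {m : Measure ℝ} {φ : ℝ → ℝ}

theorem cdfGap_mem_Icc (κ : Kernel α ℝ) [IsMarkovKernel κ] (x : α × α) (y : ℝ) :
    κ.cdfGap x y ∈ Icc (-1) 1 := by
  have h₁ : (κ x.1 (Iic y)).toReal ≤ 1 := measureReal_le_one
  have h₂ : (κ x.2 (Iic y)).toReal ≤ 1 := measureReal_le_one
  constructor <;> unfold cdfGap <;> linarith [@ENNReal.toReal_nonneg (κ x.1 (Iic y)),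
    @ENNReal.toReal_nonneg (κ x.2 (Iic y))]

theorem measurable_cdfGap (κ : Kernel α ℝ) [IsSFiniteKernel κ] :
    Measurable fun p : (α × α) × ℝ => κ.cdfGap p.1 p.2 :=
  (κ.measurable_real_Iic.comp (measurable_fst.fst.prodMk measurable_snd)).sub
    (κ.measurable_real_Iic.comp (measurable_fst.snd.prodMk measurable_snd))

theorem integrable_comp_cdfGap (κ : Kernel α ℝ) [IsMarkovKernel κ] {ρ : Measure γ}
    [IsFiniteMeasure ρ] {f : γ → (α × α) × ℝ} (hf : Measurable f) (hφm : Measurable φ) {C : ℝ}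
    (hC : ∀ t ∈ Icc (-1 : ℝ) 1, |φ t| ≤ C) :
    Integrable (fun c => φ (κ.cdfGap (f c).1 (f c).2)) ρ :=
  .of_bound ((hφm.comp ((measurable_cdfGap κ).comp hf)).aestronglyMeasurable) C
    (ae_of_all _ fun _ => hC _ (cdfGap_mem_Icc κ _ _))

theorem cdfGap_comp (κ : Kernel α ℝ) [IsMarkovKernel κ] (ν : Kernel β α) [IsMarkovKernel ν]
    (z : β × β) (y : ℝ) :
    (κ ∘ₖ ν).cdfGap z y = ∫ x, κ.cdfGap x y ∂(ν ∥ₖ ν) z := by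
  have hint (μ : Measure α) [IsFiniteMeasure μ] :
      Integrable (fun x => (κ x (Iic y)).toReal) μ :=
    .of_bound (κ.measurable_coe measurableSet_Iic).ennreal_toReal.aestronglyMeasurable 1
      (ae_of_all _ fun x => by
        rw [Real.norm_eq_abs, abs_of_nonneg ENNReal.toReal_nonneg]; exact measureReal_le_one)
  unfold cdfGap
  rw [parallelComp_apply, integral_sub ((hint _).comp_fst _) ((hint _).comp_snd _),
    integral_fun_fst (fun x => (κ x (Iic y)).toReal),
    integral_fun_snd (fun x => (κ x (Iic y)).toReal), κ.comp_real_apply ν _ measurableSet_Iic,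
    κ.comp_real_apply ν _ measurableSet_Iic]
  simp

theorem integral_cdfGap_comp_le (κ : Kernel α ℝ) [IsMarkovKernel κ] (ν : Kernel β α)
    [IsMarkovKernel ν] (m : Measure ℝ) [IsFiniteMeasure m] (hφ : ConvexOn ℝ (Icc (-1) 1) φ)
    (hφm : Measurable φ) {C : ℝ} (hC : ∀ t ∈ Icc (-1 : ℝ) 1, |φ t| ≤ C) (z : β × β) :
    ∫ y, φ ((κ ∘ₖ ν).cdfGap z y) ∂m ≤ ∫ x, ∫ y, φ (κ.cdfGap x y) ∂m ∂(ν ∥ₖ ν) z := by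
  have hinner : Integrable (fun y => ∫ x, φ (κ.cdfGap x y) ∂(ν ∥ₖ ν) z) m :=
    .of_bound
      (hφm.comp (measurable_cdfGap κ)).stronglyMeasurable.integral_prod_left'.aestronglyMeasurable
      _ (ae_of_all _ fun y =>
        norm_integral_le_of_norm_le_const (ae_of_all _ fun x => hC _ (cdfGap_mem_Icc κ x y)))
  calc ∫ y, φ ((κ ∘ₖ ν).cdfGap z y) ∂m
      ≤ ∫ y, ∫ x, φ (κ.cdfGap x y) ∂(ν ∥ₖ ν) z ∂m := by
        refine integral_mono
          (integrable_comp_cdfGap _ (f := fun y => (z, y)) (by fun_prop) hφm hC) hinner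
          fun y => ?_
        rw [cdfGap_comp]
        exact hφ.map_integral_le_of_Icc (ae_of_all _ fun x => cdfGap_mem_Icc κ x y)
          (.of_bound ((measurable_cdfGap κ).comp
            (measurable_id.prodMk measurable_const)).aestronglyMeasurable 1
            (ae_of_all _ fun x => abs_le.2 (cdfGap_mem_Icc κ x y)))
          (integrable_comp_cdfGap _ (f := fun x => (x, y)) (by fun_prop) hφm hC)
    _ = ∫ x, ∫ y, φ (κ.cdfGap x y) ∂m ∂(ν ∥ₖ ν) z :=
        integral_integral_swap (integrable_comp_cdfGap _ (f := Prod.swap) measurable_swap hφm hC)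

theorem sensitivity_congr_ae {κ η : Kernel α ℝ} (h : ∀ᵐ x ∂μ, κ x = η x) :
    κ.sensitivity μ m φ = η.sensitivity μ m φ := by
  refine integral_congr_ae ?_
  filter_upwards [Measure.quasiMeasurePreserving_fst.ae h,
    Measure.quasiMeasurePreserving_snd.ae h] with x h₁ h₂
  simp only [cdfGap, h₁, h₂]

theorem sensitivity_congr_of_eqOn (κ : Kernel α ℝ) [IsMarkovKernel κ] {ψ : ℝ → ℝ}
    (h : EqOn φ ψ (Icc (-1) 1)) : κ.sensitivity μ m φ = κ.sensitivity μ m ψ := by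
  simp only [sensitivity, h (cdfGap_mem_Icc κ _ _)]

theorem sensitivity_comp_le_of_measurable (κ : Kernel α ℝ) [IsMarkovKernel κ]
    (ν : Kernel β α) [IsMarkovKernel ν] (μ : Measure β) [IsFiniteMeasure μ]
    (m : Measure ℝ) [IsFiniteMeasure m] (hφ : ConvexOn ℝ (Icc (-1) 1) φ) (hφm : Measurable φ)
    {C : ℝ} (hC : ∀ t ∈ Icc (-1 : ℝ) 1, |φ t| ≤ C) :
    (κ ∘ₖ ν).sensitivity μ m φ ≤ κ.sensitivity (ν ∘ₘ μ) m φ := by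
  set G : α × α → ℝ := fun x => ∫ y, φ (κ.cdfGap x y) ∂m
  have hG : StronglyMeasurable G :=
    (hφm.comp (measurable_cdfGap κ)).stronglyMeasurable.integral_prod_right'
  have hGb (x : α × α) : ‖G x‖ ≤ C * m.real univ :=
    norm_integral_le_of_norm_le_const (ae_of_all _ fun y => hC _ (cdfGap_mem_Icc κ _ _))
  have hleft : Integrable (fun z => ∫ y, φ ((κ ∘ₖ ν).cdfGap z y) ∂m) (μ.prod μ) :=
    .of_bound
      (hφm.comp (measurable_cdfGap _)).stronglyMeasurable.integral_prod_right'.aestronglyMeasurable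
      _ (ae_of_all _ fun z =>
        norm_integral_le_of_norm_le_const (ae_of_all _ fun y => hC _ (cdfGap_mem_Icc _ z y)))
  have hright : Integrable (fun z => ∫ x, G x ∂(ν ∥ₖ ν) z) (μ.prod μ) :=
    .of_bound (hG.integral_kernel (κ := ν ∥ₖ ν)).aestronglyMeasurable (C * m.real univ)
      (ae_of_all _ fun z => by
        simpa using norm_integral_le_of_norm_le_const (μ := (ν ∥ₖ ν) z) (ae_of_all _ hGb))
  calc (κ ∘ₖ ν).sensitivity μ m φ ≤ ∫ z, ∫ x, G x ∂(ν ∥ₖ ν) z ∂(μ.prod μ) :=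
        integral_mono hleft hright (integral_cdfGap_comp_le κ ν m hφ hφm hC)
    _ = ∫ x, G x ∂((ν ∥ₖ ν) ∘ₘ μ.prod μ) :=
        (Measure.integral_comp (.of_bound hG.aestronglyMeasurable _ (ae_of_all _ hGb))).symm
    _ = κ.sensitivity (ν ∘ₘ μ) m φ := by rw [Measure.parallelComp_comp_prod]; rfl

theorem sensitivity_comp_le (κ : Kernel α ℝ) [IsMarkovKernel κ] (ν : Kernel β α)
    [IsMarkovKernel ν] (μ : Measure β) [IsFiniteMeasure μ] (m : Measure ℝ)
    [IsFiniteMeasure m] (hφ : ConvexOn ℝ (Icc (-1) 1) φ) :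
    (κ ∘ₖ ν).sensitivity μ m φ ≤ κ.sensitivity (ν ∘ₘ μ) m φ := by
  obtain ⟨ψ, hψm, hψφ⟩ := hφ.exists_measurable_eqOn_Icc
  obtain ⟨C, hC⟩ := hφ.exists_abs_le_of_Icc
  rw [sensitivity_congr_of_eqOn _ hψφ.symm, sensitivity_congr_of_eqOn _ hψφ.symm]
  exact sensitivity_comp_le_of_measurable κ ν μ m (hφ.congr hψφ.symm) hψm
    fun t ht => hψφ ht ▸ hC t ht

end Kernel

end ProbabilityTheory

/-- For any Borel measurable h, the sensitivity functional of the
conditional distributions of Y given h(X) is at most that of Y given X. -/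
theorem stmt11 {Ω : Type*} [MeasurableSpace Ω] (P : Measure Ω) [IsProbabilityMeasure P]
    (X Y : Ω → ℝ) (hX : Measurable X) (hY : Measurable Y)
    (h : ℝ → ℝ) (hh : Measurable h)
    (κ : Kernel ℝ ℝ) [IsMarkovKernel κ]
    (hκ : ∀ A B : Set ℝ, MeasurableSet A → MeasurableSet B →
      P.map (fun ω => (X ω, Y ω)) (A ×ˢ B) = ∫⁻ x in A, κ x B ∂(P.map X))
    (κh : Kernel ℝ ℝ) [IsMarkovKernel κh]
    (hκh : ∀ A B : Set ℝ, MeasurableSet A → MeasurableSet B →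
      P.map (fun ω => (h (X ω), Y ω)) (A ×ˢ B) = ∫⁻ z in A, κh z B ∂(P.map (h ∘ X)))
    (φ : ℝ → ℝ) (hφ : ConvexOn ℝ (Set.Icc (-1 : ℝ) 1) φ) :
    ∫ z : ℝ × ℝ, (∫ y, φ ((κh z.1 (Set.Iic y)).toReal - (κh z.2 (Set.Iic y)).toReal)
          ∂(P.map Y)) ∂((P.map (h ∘ X)).prod (P.map (h ∘ X))) ≤
      ∫ x : ℝ × ℝ, (∫ y, φ ((κ x.1 (Set.Iic y)).toReal - (κ x.2 (Set.Iic y)).toReal)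
          ∂(P.map Y)) ∂((P.map X).prod (P.map X)) := by
  have : IsProbabilityMeasure (P.map (h ∘ X)) :=
    Measure.isProbabilityMeasure_map (hh.comp hX).aemeasurable
  set ν := condDistrib X (h ∘ X) P
  have hXY : P.map (fun ω => (X ω, Y ω)) = P.map X ⊗ₘ κ := Measure.ext_prod fun hA hB => by
    rw [hκ _ _ hA hB, Measure.compProd_apply_prod hA hB]
  have hZY : P.map (fun ω => (h (X ω), Y ω)) = P.map (h ∘ X) ⊗ₘ κh :=
    Measure.ext_prod fun hA hB => by rw [hκh _ _ hA hB, Measure.compProd_apply_prod hA hB]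
  have hae : ∀ᵐ z ∂P.map (h ∘ X), κh z = (κ ∘ₖ ν) z := by
    filter_upwards [condDistrib_ae_eq_of_measure_eq_compProd (h ∘ X) hY.aemeasurable hZY,
      condDistrib_ae_eq_of_measure_eq_compProd (h ∘ X) hY.aemeasurable
        (map_prodMk_comp_eq_compProd_comp_condDistrib hX hY hh hXY)] with z h₁ h₂
    rw [← h₁, h₂]
  calc κh.sensitivity (P.map (h ∘ X)) (P.map Y) φ
      = (κ ∘ₖ ν).sensitivity (P.map (h ∘ X)) (P.map Y) φ := Kernel.sensitivity_congr_ae hae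
    _ ≤ κ.sensitivity (ν ∘ₘ P.map (h ∘ X)) (P.map Y) φ := κ.sensitivity_comp_le ν _ _ hφ
    _ = κ.sensitivity (P.map X) (P.map Y) φ := by
        rw [condDistrib_comp_map (hh.comp hX).aemeasurable hX.aemeasurable]
end

section
/- Let (Ω, 𝒜, P) be a probability space, X, Y : Ω → ℝ random variables, φ : [−1,1] → ℝ a measurable function, and h : ℝ → ℝ a bijective Borel measurable function with Borel measurable inverse. Then ∫_{ℝ×ℝ} ∫_ℝ φ(F_{Y|h(X)=z₁}(y) − F_{Y|h(X)=z₂}(y)) dP^Y(y) d(P^{h(X)} ⊗ P^{h(X)})(z₁,z₂) = ∫_{ℝ×ℝ} ∫_ℝ φ(F_{Y|X=x₁}(y) − F_{Y|X=x₂}(y)) dP^Y(y) d(P^X ⊗ P^X)(x₁,x₂). -/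
/-!
Since `h` is injective and Borel, it is a measurable embedding (Lusin–Souslin). Pushing
`P^X ⊗ (κh ∘ h)` forward along `h × id` gives `P^{h(X)} ⊗ κh`, the law of `(h(X), Y)`, which is
also the pushforward of the law `P^X ⊗ κ` of `(X, Y)`. Pushforward along a measurable embedding is
injective on measures and disintegrations are unique almost everywhere, so `κh (h x) = κ x` for
`P^X`-a.e. `x`. The substitution `z = h x` in the outer integral then turns one side into the other.
-/

open MeasureTheory ProbabilityTheory Set

section Disintegration

variable {α β γ Ω : Type*} {mα : MeasurableSpace α} {mβ : MeasurableSpace β}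
  {mγ : MeasurableSpace γ} {mΩ : MeasurableSpace Ω}

lemma MeasurableEmbedding.map_map {g : β → γ} (hg : MeasurableEmbedding g)
    (μ : Measure Ω) (f : Ω → β) : (μ.map f).map g = μ.map (g ∘ f) := by
  by_cases hf : AEMeasurable f μ
  · exact AEMeasurable.map_map_of_aemeasurable hg.measurable.aemeasurable hf
  · rw [Measure.map_of_not_aemeasurable hf, Measure.map_of_not_aemeasurable
      (hg.aemeasurable_comp_iff.not.mpr hf), Measure.map_zero]

namespace MeasureTheory.Measure

lemma eq_compProd_of_apply_prod {ρ : Measure (α × β)} [IsFiniteMeasure ρ] {μ : Measure α}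
    [SFinite μ] {κ : Kernel α β} [IsSFiniteKernel κ]
    (h : ∀ A B, MeasurableSet A → MeasurableSet B → ρ (A ×ˢ B) = ∫⁻ x in A, κ x B ∂μ) :
    ρ = μ ⊗ₘ κ :=
  ext_prod fun hA hB => (h _ _ hA hB).trans (compProd_apply_prod hA hB).symm

lemma map_prodMap_compProd_comap (μ : Measure α) [SFinite μ] (κ : Kernel γ β)
    [IsSFiniteKernel κ] {f : α → γ} (hf : Measurable f) :
    (μ ⊗ₘ κ.comap f hf).map (Prod.map f id) = μ.map f ⊗ₘ κ := by
  ext s hs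
  rw [map_apply (hf.prodMap measurable_id) hs, compProd_apply ((hf.prodMap measurable_id) hs),
    compProd_apply hs, lintegral_map (Kernel.measurable_kernel_prodMk_left hs) hf]
  rfl

end MeasureTheory.Measure

lemma ProbabilityTheory.Kernel.comap_ae_eq_of_map_compProd
    [MeasurableSpace.CountableOrCountablyGenerated α β] {μ : Measure α} [IsFiniteMeasure μ]
    {κ : Kernel α β} [IsFiniteKernel κ] {η : Kernel γ β} [IsFiniteKernel η] {f : α → γ}
    (hf : MeasurableEmbedding f) (h : (μ ⊗ₘ κ).map (Prod.map f id) = μ.map f ⊗ₘ η) :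
    η.comap f hf.measurable =ᵐ[μ] κ :=
  ae_eq_of_compProd_eq <| (hf.prodMap MeasurableEmbedding.id).map_injective <| by
    rw [Measure.map_prodMap_compProd_comap, h]

end Disintegration

section CdfGap

variable {α γ : Type*} {mα : MeasurableSpace α} {mγ : MeasurableSpace γ}

noncomputable def cdfGapIntegral (φ : ℝ → ℝ) (ν : Measure ℝ) (κ : Kernel α ℝ) (μ : Measure α) :
    ℝ :=
  ∫ z : α × α, ∫ y, φ ((κ z.1 (Iic y)).toReal - (κ z.2 (Iic y)).toReal) ∂ν ∂(μ.prod μ)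

variable (φ : ℝ → ℝ) (ν : Measure ℝ) {μ : Measure α}

lemma cdfGapIntegral_congr_ae {κ η : Kernel α ℝ} (hκη : κ =ᵐ[μ] η) :
    cdfGapIntegral φ ν κ μ = cdfGapIntegral φ ν η μ := by
  refine integral_congr_ae ?_
  filter_upwards [Measure.quasiMeasurePreserving_fst.ae hκη,
    Measure.quasiMeasurePreserving_snd.ae hκη] with z h₁ h₂
  simp only [h₁, h₂]

lemma cdfGapIntegral_map [SFinite μ] (κ : Kernel γ ℝ) {f : α → γ} (hf : MeasurableEmbedding f) :
    cdfGapIntegral φ ν κ (μ.map f) = cdfGapIntegral φ ν (κ.comap f hf.measurable) μ := by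
  rw [cdfGapIntegral, Measure.map_prod_map _ _ hf.measurable hf.measurable,
    (hf.prodMap hf).integral_map]
  rfl

end CdfGap

theorem stmt13_general {Ω : Type*} [MeasurableSpace Ω] (P : Measure Ω) [IsProbabilityMeasure P]
    (X Y : Ω → ℝ)
    (φ : ℝ → ℝ)
    (h : ℝ → ℝ) (hbij : Function.Bijective h) (hh : Measurable h)
    (κ : Kernel ℝ ℝ) [IsMarkovKernel κ]
    (hκ : ∀ A B : Set ℝ, MeasurableSet A → MeasurableSet B →
      P.map (fun ω => (X ω, Y ω)) (A ×ˢ B) = ∫⁻ x in A, κ x B ∂(P.map X))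
    (κh : Kernel ℝ ℝ) [IsMarkovKernel κh]
    (hκh : ∀ A B : Set ℝ, MeasurableSet A → MeasurableSet B →
      P.map (fun ω => (h (X ω), Y ω)) (A ×ˢ B) = ∫⁻ z in A, κh z B ∂(P.map (h ∘ X))) :
    ∫ z : ℝ × ℝ, (∫ y, φ ((κh z.1 (Set.Iic y)).toReal - (κh z.2 (Set.Iic y)).toReal)
          ∂(P.map Y)) ∂((P.map (h ∘ X)).prod (P.map (h ∘ X))) =
      ∫ x : ℝ × ℝ, (∫ y, φ ((κ x.1 (Set.Iic y)).toReal - (κ x.2 (Set.Iic y)).toReal)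
          ∂(P.map Y)) ∂((P.map X).prod (P.map X)) := by
  have he : MeasurableEmbedding h := hh.measurableEmbedding hbij.injective
  have hmap : P.map (h ∘ X) = (P.map X).map h := (he.map_map P X).symm
  have hlaw : P.map (fun ω => (X ω, Y ω)) = P.map X ⊗ₘ κ := Measure.eq_compProd_of_apply_prod hκ
  have hlawh : P.map (fun ω => (h (X ω), Y ω)) = P.map (h ∘ X) ⊗ₘ κh :=
    Measure.eq_compProd_of_apply_prod hκh
  have hκh_comap : κh.comap h hh =ᵐ[P.map X] κ := by
    refine Kernel.comap_ae_eq_of_map_compProd he ?_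
    rw [← hlaw, (he.prodMap MeasurableEmbedding.id).map_map, ← hmap]
    exact hlawh
  change cdfGapIntegral φ (P.map Y) κh (P.map (h ∘ X)) = cdfGapIntegral φ (P.map Y) κ (P.map X)
  rw [hmap, cdfGapIntegral_map _ _ _ he, cdfGapIntegral_congr_ae _ _ hκh_comap]

/-- Invariance in X: For bijective Borel measurable h with Borel
measurable inverse, the sensitivity functional of the conditional distributions
of Y given h(X) equals that of Y given X. -/
theorem stmt13 {Ω : Type*} [MeasurableSpace Ω] (P : Measure Ω) [IsProbabilityMeasure P]
    (X Y : Ω → ℝ) (hX : Measurable X) (hY : Measurable Y)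
    (φ : ℝ → ℝ) (hφ : Measurable φ)
    (h : ℝ → ℝ) (hbij : Function.Bijective h) (hh : Measurable h)
    (hinv : Measurable (Function.invFun h))
    (κ : Kernel ℝ ℝ) [IsMarkovKernel κ]
    (hκ : ∀ A B : Set ℝ, MeasurableSet A → MeasurableSet B →
      P.map (fun ω => (X ω, Y ω)) (A ×ˢ B) = ∫⁻ x in A, κ x B ∂(P.map X))
    (κh : Kernel ℝ ℝ) [IsMarkovKernel κh]
    (hκh : ∀ A B : Set ℝ, MeasurableSet A → MeasurableSet B →
      P.map (fun ω => (h (X ω), Y ω)) (A ×ˢ B) = ∫⁻ z in A, κh z B ∂(P.map (h ∘ X))) :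
    ∫ z : ℝ × ℝ, (∫ y, φ ((κh z.1 (Set.Iic y)).toReal - (κh z.2 (Set.Iic y)).toReal)
          ∂(P.map Y)) ∂((P.map (h ∘ X)).prod (P.map (h ∘ X))) =
      ∫ x : ℝ × ℝ, (∫ y, φ ((κ x.1 (Set.Iic y)).toReal - (κ x.2 (Set.Iic y)).toReal)
          ∂(P.map Y)) ∂((P.map X).prod (P.map X)) :=
  stmt13_general P X Y φ h hbij hh κ hκ κh hκh
end

section
/- Let (Ω, 𝒜, P) be a probability space, X, Y : Ω → ℝ random variables, φ : [−1,1] → ℝ a measurable function, and g : ℝ → ℝ strictly increasing. Then ∫_{ℝ×ℝ} ∫_ℝ φ(F_{g(Y)|X=x₁}(t) − F_{g(Y)|X=x₂}(t)) dP^{g(Y)}(t) d(P^X ⊗ P^X)(x₁,x₂) = ∫_{ℝ×ℝ} ∫_ℝ φ(F_{Y|X=x₁}(y) − F_{Y|X=x₂}(y)) dP^Y(y) d(P^X ⊗ P^X)(x₁,x₂). -/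
open MeasureTheory ProbabilityTheory Set

/-!
For each `y`, both `x ↦ κg x (Iic (g y))` and `x ↦ κ x (Iic y)` disintegrate
`A ↦ P(X ∈ A, Y ≤ y)` with respect to `P^X`, because `g Y ≤ g y ↔ Y ≤ y`; so they agree
`P^X`-a.e. Both are jointly measurable in `(x, y)`, so Fubini upgrades this to: for `P^X`-a.e. `x`,
for `P^Y`-a.e. `y`. Finally a strictly increasing `g` is a measurable embedding, so integrating
against `P^{g(Y)}` is integrating the composition with `g` against `P^Y`.
-/

namespace ProbabilityTheory.Kernel

variable {α : Type*} [MeasurableSpace α]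

lemma measurable_apply_Iic_s14 (η : Kernel α ℝ) [IsSFiniteKernel η] :
    Measurable fun p : α × ℝ => η p.1 (Iic p.2) :=
  measurable_kernel_prodMk_left (κ := η.comap Prod.fst measurable_fst)
    (measurableSet_le measurable_snd measurable_fst.snd)

variable {ν : Measure α} {ρ : Measure (α × ℝ)} {g : ℝ → ℝ} {κ η : Kernel α ℝ}

lemma ae_apply_Iic_comp_eq_of_strictMono [SigmaFinite ν] (hg : StrictMono g)
    (hκ : ∀ (A : Set α) (B : Set ℝ), MeasurableSet A → MeasurableSet B →
      ρ (A ×ˢ B) = ∫⁻ x in A, κ x B ∂ν)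
    (hη : ∀ (A : Set α) (B : Set ℝ), MeasurableSet A → MeasurableSet B →
      ρ.map (Prod.map id g) (A ×ˢ B) = ∫⁻ x in A, η x B ∂ν) (y : ℝ) :
    ∀ᵐ x ∂ν, η x (Iic (g y)) = κ x (Iic y) := by
  refine ae_eq_of_forall_setLIntegral_eq_of_sigmaFinite (η.measurable_coe measurableSet_Iic)
    (κ.measurable_coe measurableSet_Iic) fun A hA _ => ?_
  have hpre : Prod.map id g ⁻¹' A ×ˢ Iic (g y) = A ×ˢ Iic y := by
    ext ⟨x, t⟩
    simp [hg.le_iff_le]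
  rw [← hη _ _ hA measurableSet_Iic, ← hκ _ _ hA measurableSet_Iic,
    Measure.map_apply (measurable_id.prodMap hg.monotone.measurable) (hA.prod measurableSet_Iic),
    hpre]

lemma ae_ae_apply_Iic_comp_eq_of_strictMono [SigmaFinite ν] [IsSFiniteKernel κ]
    [IsSFiniteKernel η] (hg : StrictMono g)
    (hκ : ∀ (A : Set α) (B : Set ℝ), MeasurableSet A → MeasurableSet B →
      ρ (A ×ˢ B) = ∫⁻ x in A, κ x B ∂ν)
    (hη : ∀ (A : Set α) (B : Set ℝ), MeasurableSet A → MeasurableSet B →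
      ρ.map (Prod.map id g) (A ×ˢ B) = ∫⁻ x in A, η x B ∂ν)
    (μ : Measure ℝ) [SFinite μ] :
    ∀ᵐ x ∂ν, ∀ᵐ y ∂μ, η x (Iic (g y)) = κ x (Iic y) := by
  have hmeas : MeasurableSet {p : α × ℝ | η p.1 (Iic (g p.2)) = κ p.1 (Iic p.2)} :=
    measurableSet_eq_fun
      (η.measurable_apply_Iic_s14.comp (measurable_fst.prodMk (hg.monotone.measurable.comp
        measurable_snd)))
      κ.measurable_apply_Iic_s14
  exact (Measure.ae_ae_comm hmeas).mpr
    (ae_of_all _ (ae_apply_Iic_comp_eq_of_strictMono hg hκ hη))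

end ProbabilityTheory.Kernel

theorem stmt14_general {Ω : Type*} [MeasurableSpace Ω] (P : Measure Ω) [IsProbabilityMeasure P]
    (X Y : Ω → ℝ) (hX : Measurable X) (hY : Measurable Y)
    (φ : ℝ → ℝ)
    (g : ℝ → ℝ) (hg : StrictMono g)
    (κ : Kernel ℝ ℝ) [IsMarkovKernel κ]
    (hκ : ∀ A B : Set ℝ, MeasurableSet A → MeasurableSet B →
      P.map (fun ω => (X ω, Y ω)) (A ×ˢ B) = ∫⁻ x in A, κ x B ∂(P.map X))
    (κg : Kernel ℝ ℝ) [IsMarkovKernel κg]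
    (hκg : ∀ A B : Set ℝ, MeasurableSet A → MeasurableSet B →
      P.map (fun ω => (X ω, g (Y ω))) (A ×ˢ B) = ∫⁻ x in A, κg x B ∂(P.map X)) :
    ∫ x : ℝ × ℝ, (∫ t, φ ((κg x.1 (Set.Iic t)).toReal - (κg x.2 (Set.Iic t)).toReal)
          ∂(P.map (g ∘ Y))) ∂((P.map X).prod (P.map X)) =
      ∫ x : ℝ × ℝ, (∫ y, φ ((κ x.1 (Set.Iic y)).toReal - (κ x.2 (Set.Iic y)).toReal)
          ∂(P.map Y)) ∂((P.map X).prod (P.map X)) := by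
  have hg_emb : MeasurableEmbedding g := hg.monotone.measurable.measurableEmbedding hg.injective
  have hXY_map : P.map (fun ω => (X ω, g (Y ω))) =
      (P.map fun ω => (X ω, Y ω)).map (Prod.map id g) := by
    rw [Measure.map_map (measurable_id.prodMap hg_emb.measurable) (hX.prodMk hY)]
    rfl
  have : IsProbabilityMeasure (P.map X) := Measure.isProbabilityMeasure_map hX.aemeasurable
  have hae := Kernel.ae_ae_apply_Iic_comp_eq_of_strictMono hg hκ (hXY_map ▸ hκg) (P.map Y)
  refine integral_congr_ae ?_
  filter_upwards [Measure.quasiMeasurePreserving_fst.ae hae,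
    Measure.quasiMeasurePreserving_snd.ae hae] with p h₁ h₂
  rw [← Measure.map_map hg_emb.measurable hY, hg_emb.integral_map]
  refine integral_congr_ae ?_
  filter_upwards [h₁, h₂] with y hy₁ hy₂
  rw [hy₁, hy₂]

/-- Invariance in Y: For strictly increasing g, the sensitivity
functional of the conditional distributions of g(Y) given X equals that of
Y given X. -/
theorem stmt14 {Ω : Type*} [MeasurableSpace Ω] (P : Measure Ω) [IsProbabilityMeasure P]
    (X Y : Ω → ℝ) (hX : Measurable X) (hY : Measurable Y)
    (φ : ℝ → ℝ) (hφ : Measurable φ)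
    (g : ℝ → ℝ) (hg : StrictMono g)
    (κ : Kernel ℝ ℝ) [IsMarkovKernel κ]
    (hκ : ∀ A B : Set ℝ, MeasurableSet A → MeasurableSet B →
      P.map (fun ω => (X ω, Y ω)) (A ×ˢ B) = ∫⁻ x in A, κ x B ∂(P.map X))
    (κg : Kernel ℝ ℝ) [IsMarkovKernel κg]
    (hκg : ∀ A B : Set ℝ, MeasurableSet A → MeasurableSet B →
      P.map (fun ω => (X ω, g (Y ω))) (A ×ˢ B) = ∫⁻ x in A, κg x B ∂(P.map X)) :
    ∫ x : ℝ × ℝ, (∫ t, φ ((κg x.1 (Set.Iic t)).toReal - (κg x.2 (Set.Iic t)).toReal)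
          ∂(P.map (g ∘ Y))) ∂((P.map X).prod (P.map X)) =
      ∫ x : ℝ × ℝ, (∫ y, φ ((κ x.1 (Set.Iic y)).toReal - (κ x.2 (Set.Iic y)).toReal)
          ∂(P.map Y)) ∂((P.map X).prod (P.map X)) :=
  stmt14_general P X Y hX hY φ g hg κ hκ κg hκg
end
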